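/- arXiv:2602.19660 — 13 statements merged into one kernel-verified Lean document; each statement's English description precedes it below -/
import Mathlib

section
/- Let H be a real inner product space, let K ⊆ H be a convex set containing 0, and let D ∈ H. Suppose y ∈ K maximizes B ↦ ⟨D, B⟩ − ‖B‖² over K and x ∈ K maximizes B ↦ 2⟨D, B⟩ − ‖B‖² over K. Then 3·(2⟨D, x⟩ − ‖x‖²) ≤ 4·(2⟨D, y⟩ − ‖y‖²). In particular, if 2⟨D, y⟩ − ‖y‖² > 0 then the ratio (2⟨D, x⟩ − ‖x‖²)/(2⟨D, y⟩ − ‖y‖²) is at most 4/3. -/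
open RealInnerProductSpace

/-!
The profit-maximizing `y` satisfies the first-order condition `⟪D, x - y⟫ ≤ 2⟪y, x - y⟫`, which
together with `‖x - 2y‖² ≥ 0` bounds the welfare `2⟪D, x⟫ - ‖x‖²` of any `x ∈ K` by `2⟪D, y⟫`.
Comparing the profit of `y` with that of `x / 2 ∈ K` bounds the same welfare by
`4(⟪D, y⟫ - ‖y‖²)`. Two thirds of the first bound plus one third of the second is
`4/3 · (2⟪D, y⟫ - ‖y‖²)`.
-/

theorem inner_sub_le_two_mul_inner_sub_of_isMaxOn {H : Type*} [NormedAddCommGroup H]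
    [InnerProductSpace ℝ H] {K : Set H} (hK : Convex ℝ K) {D y z : H}
    (hmax : IsMaxOn (fun B => ⟪D, B⟫ - ‖B‖ ^ 2) K y) (hy : y ∈ K) (hz : z ∈ K) :
    ⟪D, z - y⟫ ≤ 2 * ⟪y, z - y⟫ := by
  have hderiv : HasFDerivWithinAt (fun B => ⟪D, B⟫ - ‖B‖ ^ 2)
      (innerSL ℝ D - 2 • innerSL ℝ y) K y :=
    ((innerSL ℝ D).hasFDerivAt.sub (hasStrictFDerivAt_norm_sq y).hasFDerivAt).hasFDerivWithinAt
  have h := hmax.localize.hasFDerivWithinAt_nonpos hderiv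
    (sub_mem_posTangentConeAt_of_segment_subset (hK.segment_subset hy hz))
  simp only [sub_apply, smul_apply, innerSL_apply_apply, nsmul_eq_mul, Nat.cast_ofNat] at h
  linarith

theorem stmt0_general {H : Type*} [NormedAddCommGroup H] [InnerProductSpace ℝ H]
    (K : Set H) (hK : Convex ℝ K) (h0 : (0 : H) ∈ K) (D : H)
    (y : H) (hyK : y ∈ K)
    (hymax : ∀ B ∈ K, ⟪D, B⟫ - ‖B‖ ^ 2 ≤ ⟪D, y⟫ - ‖y‖ ^ 2)
    (x : H) (hxK : x ∈ K) :
    3 * (2 * ⟪D, x⟫ - ‖x‖ ^ 2) ≤ 4 * (2 * ⟪D, y⟫ - ‖y‖ ^ 2) ∧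
    (0 < 2 * ⟪D, y⟫ - ‖y‖ ^ 2 →
      (2 * ⟪D, x⟫ - ‖x‖ ^ 2) / (2 * ⟪D, y⟫ - ‖y‖ ^ 2) ≤ 4 / 3) := by
  have hfoc := inner_sub_le_two_mul_inner_sub_of_isMaxOn hK (isMaxOn_iff.2 hymax) hyK hxK
  have hsq : 0 ≤ ‖x - (2 : ℝ) • y‖ ^ 2 := sq_nonneg _
  have hhalf := hymax _ (hK.smul_mem_of_zero_mem h0 hxK ⟨by norm_num, by norm_num⟩ :
    (1 / 2 : ℝ) • x ∈ K)
  rw [norm_sub_sq_real, norm_smul, inner_smul_right] at hsq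
  rw [norm_smul, inner_smul_right] at hhalf
  simp only [inner_sub_right, real_inner_self_eq_norm_sq, real_inner_comm x y, Real.norm_eq_abs,
    abs_two, abs_div, abs_one] at hfoc hsq hhalf
  have hbound : 3 * (2 * ⟪D, x⟫ - ‖x‖ ^ 2) ≤ 4 * (2 * ⟪D, y⟫ - ‖y‖ ^ 2) := by linarith
  exact ⟨hbound, fun hpos => by rw [div_le_iff₀ hpos]; linarith⟩

/-- Price of Anarchy bound 4/3 for linear price functions, abstract inner
product space form: if `y` maximizes `B ↦ ⟪D,B⟫ - ‖B‖²` and `x` maximizes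
`B ↦ 2⟪D,B⟫ - ‖B‖²` over a convex set `K` containing `0`, then
`3·(2⟪D,x⟫ - ‖x‖²) ≤ 4·(2⟪D,y⟫ - ‖y‖²)`, and hence the ratio is at most `4/3`. -/
theorem stmt0 {H : Type*} [NormedAddCommGroup H] [InnerProductSpace ℝ H]
    (K : Set H) (hK : Convex ℝ K) (h0 : (0 : H) ∈ K) (D : H)
    (y : H) (hyK : y ∈ K)
    (hymax : ∀ B ∈ K, ⟪D, B⟫ - ‖B‖ ^ 2 ≤ ⟪D, y⟫ - ‖y‖ ^ 2)
    (x : H) (hxK : x ∈ K)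
    (hxmax : ∀ B ∈ K, 2 * ⟪D, B⟫ - ‖B‖ ^ 2 ≤ 2 * ⟪D, x⟫ - ‖x‖ ^ 2) :
    3 * (2 * ⟪D, x⟫ - ‖x‖ ^ 2) ≤ 4 * (2 * ⟪D, y⟫ - ‖y‖ ^ 2) ∧
    (0 < 2 * ⟪D, y⟫ - ‖y‖ ^ 2 →
      (2 * ⟪D, x⟫ - ‖x‖ ^ 2) / (2 * ⟪D, y⟫ - ‖y‖ ^ 2) ≤ 4 / 3) :=
  stmt0_general K hK h0 D y hyK hymax x hxK
end

section
/- Let H be a real inner product space and let D, x, y ∈ H. Assume the variational inequalities ⟨D − 2y, x − y⟩ ≤ 0 and ⟨D, y⟩ ≥ 2‖y‖² hold. Then 4·(2⟨D, y⟩ − ‖y‖²) − 3·(2⟨D, x⟩ − ‖x‖²) ≥ 3·‖2y − x‖² ≥ 0. -/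
open RealInnerProductSpace

/-- Key inequality behind the `4/3` Price of Anarchy bound: if the variational
inequalities `⟪D − 2y, x − y⟫ ≤ 0` and `⟪D, y⟫ ≥ 2‖y‖²` hold, then
`4·(2⟪D,y⟫ − ‖y‖²) − 3·(2⟪D,x⟫ − ‖x‖²) ≥ 3·‖2y − x‖² ≥ 0`. -/
theorem stmt1 {H : Type*} [NormedAddCommGroup H] [InnerProductSpace ℝ H]
    (D x y : H)
    (h1 : ⟪D - (2 : ℝ) • y, x - y⟫ ≤ 0)
    (h2 : ⟪D, y⟫ ≥ 2 * ‖y‖ ^ 2) :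
    4 * (2 * ⟪D, y⟫ - ‖y‖ ^ 2) - 3 * (2 * ⟪D, x⟫ - ‖x‖ ^ 2) ≥ 3 * ‖(2 : ℝ) • y - x‖ ^ 2 ∧
    3 * ‖(2 : ℝ) • y - x‖ ^ 2 ≥ 0 := by
  have hexp : ‖(2 : ℝ) • y - x‖ ^ 2 = 4 * ‖y‖ ^ 2 - 4 * ⟪y, x⟫ + ‖x‖ ^ 2 := by
    rw [@norm_sub_sq_real, norm_smul, inner_smul_left]
    simp [mul_pow]
    ring
  have h1' : ⟪D, x⟫ - ⟪D, y⟫ - 2 * ⟪y, x⟫ + 2 * ‖y‖ ^ 2 ≤ 0 := by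
    have := h1
    rw [inner_sub_left, inner_sub_right, inner_sub_right, inner_smul_left,
      inner_smul_left, real_inner_self_eq_norm_sq] at this
    simp only [starRingEnd_apply, star_trivial] at this
    linarith
  constructor
  · rw [hexp]; linarith
  · positivity
end

section
/- Let D(t) = 1 + sin(2πt) on [0,1] and let B₀(t) = sin(2πt)/2. Then: (i) for every square-integrable B : [0,1] → ℝ with ∫₀¹ B(t) dt = 0, one has ∫₀¹ (D(t)·B(t) − B(t)²) dt ≤ ∫₀¹ (D(t)·B₀(t) − B₀(t)²) dt = 1/8; (ii) ∫₀¹ (D(t)² − (D(t) − sin(2πt))²) dt = 1/2 and ∫₀¹ (D(t)² − (D(t) − B₀(t))²) dt = 3/8, so the ratio of the maximal welfare improvement to the welfare improvement of the revenue-maximizing battery equals 4/3. -/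
open Real MeasureTheory intervalIntegral

private lemma isin : (∫ t in (0:ℝ)..1, Real.sin (2 * π * t)) = 0 := by
  have h2 : (2 * π) ≠ 0 := by positivity
  rw [intervalIntegral.integral_comp_mul_left Real.sin h2]
  simp [integral_sin, Real.cos_two_pi]

private lemma isin2 : (∫ t in (0:ℝ)..1, Real.sin (2 * π * t) ^ 2) = 1 / 2 := by
  have h2 : (2 * π) ≠ 0 := by positivity
  rw [intervalIntegral.integral_comp_mul_left (fun x => Real.sin x ^ 2) h2]
  have hπ : (π : ℝ) ≠ 0 := Real.pi_ne_zero
  simp [integral_sin_sq, Real.sin_two_pi, Real.cos_two_pi]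
  field_simp

private lemma hs_cont : Continuous (fun t : ℝ => Real.sin (2 * π * t)) := by
  continuity

private lemma key (a b c : ℝ) :
    (∫ t in (0:ℝ)..1,
      (a + b * Real.sin (2 * π * t) + c * Real.sin (2 * π * t) ^ 2)) = a + c / 2 := by
  have h1 : IntervalIntegrable (fun t => b * Real.sin (2 * π * t)) volume 0 1 :=
    (continuous_const.mul hs_cont).intervalIntegrable 0 1
  have h2 : IntervalIntegrable (fun t => c * Real.sin (2 * π * t) ^ 2) volume 0 1 :=
    (continuous_const.mul (hs_cont.pow 2)).intervalIntegrable 0 1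
  have h0 : IntervalIntegrable (fun _ : ℝ => a) volume 0 1 :=
    intervalIntegrable_const
  rw [intervalIntegral.integral_add (h0.add h1) h2, intervalIntegral.integral_add h0 h1,
    intervalIntegral.integral_const_mul, intervalIntegral.integral_const_mul, isin, isin2]
  simp
  ring

/-- Tightness of the `4/3` Price of Anarchy bound for linear prices:
with demand `D(t) = 1 + sin(2πt)` and `B₀(t) = sin(2πt)/2`,
(i) `B₀` maximizes `∫₀¹ (D·B − B²)` (proportional to revenue) over all
square-integrable battery policies `B` with `∫₀¹ B = 0`, with value `1/8`;
(ii) the welfare improvement of the optimal battery `B = sin(2π·)` is `1/2`,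
that of `B₀` is `3/8`, and their ratio is `4/3`. -/
theorem stmt2 :
    (∀ B : ℝ → ℝ, IntervalIntegrable B volume 0 1 →
      IntervalIntegrable (fun t => (B t) ^ 2) volume 0 1 →
      (∫ t in (0:ℝ)..1, B t) = 0 →
      (∫ t in (0:ℝ)..1, ((1 + Real.sin (2 * π * t)) * B t - (B t) ^ 2)) ≤
        ∫ t in (0:ℝ)..1, ((1 + Real.sin (2 * π * t)) * (Real.sin (2 * π * t) / 2)
          - (Real.sin (2 * π * t) / 2) ^ 2)) ∧
    (∫ t in (0:ℝ)..1, ((1 + Real.sin (2 * π * t)) * (Real.sin (2 * π * t) / 2)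
        - (Real.sin (2 * π * t) / 2) ^ 2)) = 1 / 8 ∧
    (∫ t in (0:ℝ)..1, ((1 + Real.sin (2 * π * t)) ^ 2
        - ((1 + Real.sin (2 * π * t)) - Real.sin (2 * π * t)) ^ 2)) = 1 / 2 ∧
    (∫ t in (0:ℝ)..1, ((1 + Real.sin (2 * π * t)) ^ 2
        - ((1 + Real.sin (2 * π * t)) - Real.sin (2 * π * t) / 2) ^ 2)) = 3 / 8 ∧
    (∫ t in (0:ℝ)..1, ((1 + Real.sin (2 * π * t)) ^ 2
        - ((1 + Real.sin (2 * π * t)) - Real.sin (2 * π * t)) ^ 2)) /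
      (∫ t in (0:ℝ)..1, ((1 + Real.sin (2 * π * t)) ^ 2
        - ((1 + Real.sin (2 * π * t)) - Real.sin (2 * π * t) / 2) ^ 2)) = 4 / 3 := by
  have hrhs : (∫ t in (0:ℝ)..1, ((1 + Real.sin (2 * π * t)) * (Real.sin (2 * π * t) / 2)
      - (Real.sin (2 * π * t) / 2) ^ 2)) = 1 / 8 := by
    have h := key 0 (1/2) (1/4)
    rw [intervalIntegral.integral_congr (g := fun t =>
      (0 + (1/2) * Real.sin (2 * π * t) + (1/4) * Real.sin (2 * π * t) ^ 2))
      (fun t _ => by ring), h]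
    norm_num
  have h2 : (∫ t in (0:ℝ)..1, ((1 + Real.sin (2 * π * t)) ^ 2
      - ((1 + Real.sin (2 * π * t)) - Real.sin (2 * π * t)) ^ 2)) = 1 / 2 := by
    have h := key 0 2 1
    rw [intervalIntegral.integral_congr (g := fun t =>
      (0 + 2 * Real.sin (2 * π * t) + 1 * Real.sin (2 * π * t) ^ 2))
      (fun t _ => by ring), h]
    norm_num
  have h3 : (∫ t in (0:ℝ)..1, ((1 + Real.sin (2 * π * t)) ^ 2
      - ((1 + Real.sin (2 * π * t)) - Real.sin (2 * π * t) / 2) ^ 2)) = 3 / 8 := by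
    have h := key 0 1 (3/4)
    rw [intervalIntegral.integral_congr (g := fun t =>
      (0 + 1 * Real.sin (2 * π * t) + (3/4) * Real.sin (2 * π * t) ^ 2))
      (fun t _ => by ring), h]
    norm_num
  refine ⟨?_, hrhs, h2, h3, by rw [h2, h3]; norm_num⟩
  intro B hB hB2 hB0
  rw [hrhs]
  have hsB : IntervalIntegrable (fun t => Real.sin (2 * π * t) * B t) volume 0 1 :=
    hB.continuousOn_mul hs_cont.continuousOn
  have hs2 : IntervalIntegrable (fun t => Real.sin (2 * π * t) ^ 2 / 4) volume 0 1 :=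
    ((hs_cont.pow 2).div_const 4).intervalIntegrable 0 1
  have hq : IntervalIntegrable
      (fun t => (B t - Real.sin (2 * π * t) / 2) ^ 2) volume 0 1 := by
    have heq : (fun t => (B t - Real.sin (2 * π * t) / 2) ^ 2)
        = fun t => (B t) ^ 2 - Real.sin (2 * π * t) * B t + Real.sin (2 * π * t) ^ 2 / 4 := by
      funext t; ring
    rw [heq]
    exact (hB2.sub hsB).add hs2
  have hmix : IntervalIntegrable
      (fun t => Real.sin (2 * π * t) * B t - (B t) ^ 2) volume 0 1 := hsB.sub hB2
  have step1 : (∫ t in (0:ℝ)..1, ((1 + Real.sin (2 * π * t)) * B t - (B t) ^ 2))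
      = (∫ t in (0:ℝ)..1, B t)
        + ∫ t in (0:ℝ)..1, (Real.sin (2 * π * t) * B t - (B t) ^ 2) := by
    rw [← intervalIntegral.integral_add hB hmix]
    exact intervalIntegral.integral_congr fun t _ => by ring
  have step2 : (∫ t in (0:ℝ)..1, (Real.sin (2 * π * t) * B t - (B t) ^ 2))
      = (∫ t in (0:ℝ)..1, Real.sin (2 * π * t) ^ 2 / 4)
        - ∫ t in (0:ℝ)..1, (B t - Real.sin (2 * π * t) / 2) ^ 2 := by
    rw [← intervalIntegral.integral_sub hs2 hq]
    exact intervalIntegral.integral_congr fun t _ => by ring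
  have hval : (∫ t in (0:ℝ)..1, Real.sin (2 * π * t) ^ 2 / 4) = 1 / 8 := by
    rw [intervalIntegral.integral_div, isin2]; norm_num
  have hnn : (0:ℝ) ≤ ∫ t in (0:ℝ)..1, (B t - Real.sin (2 * π * t) / 2) ^ 2 :=
    intervalIntegral.integral_nonneg (by norm_num) (fun t _ => sq_nonneg _)
  rw [step1, hB0, zero_add, step2, hval]
  linarith
end

section
/- Fix δ ∈ (0, 1/2) and define P_δ on [0,1] by P_δ(z) = 2 for z ∈ [0, 1/2], P_δ(z) = 1/(1−z) for z ∈ (1/2, 1−δ], and P_δ(z) = (z − 1 + δ)/δ² + 1/δ for z ∈ (1−δ, 1]. Then P_δ is nondecreasing and convex on [0,1], and the function x ↦ x·(P_δ(1−x) − P_δ(x)) on [0, 1/2] attains its maximum at the unique point x = δ − δ². -/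
/-!
The middle piece of `P_δ` is `z ↦ 1/(1-z)` and the last piece is its tangent line at `1 - δ`.
Every tangent line of `1/(1-z)` at a point `y ≤ 1 - δ` lies below `P_δ`, and `P_δ ≥ 2`; these
give a supporting line at every point, hence convexity, and a convex function that is minimal at
the left end of an interval is nondecreasing there.

Since `P_δ = 2` on `[0, 1/2]`, the profit is `x (P_δ(1-x) - 2)`. For `x < δ` the point `1 - x`
lies on the linear piece and the profit equals `(1-δ)² - (x - (δ - δ²))²/δ²`; for `δ ≤ x ≤ 1/2`
it equals `1 - 2x < (1-δ)²`.
-/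

noncomputable def Pdelta (δ : ℝ) : ℝ → ℝ := fun z =>
  if z ≤ 1 / 2 then 2
  else if z ≤ 1 - δ then 1 / (1 - z)
  else (z - 1 + δ) / δ ^ 2 + 1 / δ

section Convexity

variable {𝕜 β : Type*} [Field 𝕜] [LinearOrder 𝕜] [IsStrictOrderedRing 𝕜]

lemma convexOn_of_forall_exists_add_mul_le {s : Set 𝕜} {f : 𝕜 → 𝕜} (hs : Convex 𝕜 s)
    (h : ∀ y ∈ s, ∃ m : 𝕜, ∀ z ∈ s, f y + m * (z - y) ≤ f z) :
    ConvexOn 𝕜 s f := by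
  refine ⟨hs, fun x hx z hz a b ha hb hab => ?_⟩
  obtain ⟨m, hm⟩ := h (a • x + b • z) (hs hx hz ha hb hab)
  have hmx := mul_le_mul_of_nonneg_left (hm x hx) ha
  have hmz := mul_le_mul_of_nonneg_left (hm z hz) hb
  simp only [smul_eq_mul] at hmx hmz ⊢
  rw [← sub_eq_zero] at hab
  linear_combination hmx + hmz + (m * (a * x + b * z) - f (a * x + b * z)) * hab

lemma ConvexOn.monotoneOn_of_isMinOn [AddCommGroup β] [LinearOrder β] [IsOrderedAddMonoid β]
    [Module 𝕜 β] [IsStrictOrderedModule 𝕜 β] {s : Set 𝕜} {f : 𝕜 → β} {a : 𝕜}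
    (hf : ConvexOn 𝕜 s f) (has : a ∈ s) (ha : a ∈ lowerBounds s) (hmin : IsMinOn f s a) :
    MonotoneOn f s := fun _ hx _ hy hxy =>
  (hf.le_max_of_mem_Icc has hy ⟨ha hx, hxy⟩).trans (max_le (hmin hy) le_rfl)

end Convexity

noncomputable def invOneSubTangent (y z : ℝ) : ℝ := 1 / (1 - y) + (z - y) / (1 - y) ^ 2

lemma invOneSubTangent_le {y z : ℝ} (hy : y < 1) (hz : z < 1) :
    invOneSubTangent y z ≤ 1 / (1 - z) := by
  have hy' : 0 < 1 - y := by linarith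
  have hz' : 0 < 1 - z := by linarith
  rw [invOneSubTangent, div_add_div _ _ hy'.ne' (by positivity),
    div_le_div_iff₀ (by positivity) hz']
  nlinarith [mul_nonneg hy'.le (sq_nonneg (y - z))]

lemma invOneSubTangent_add_mul (y y' z : ℝ) :
    invOneSubTangent y' y + 1 / (1 - y') ^ 2 * (z - y) = invOneSubTangent y' z := by
  unfold invOneSubTangent
  ring

lemma invOneSubTangent_le_invOneSubTangent {y y' z : ℝ} (hyy' : y ≤ y') (hy' : y' < 1)
    (hy'z : y' ≤ z) :
    invOneSubTangent y z ≤ invOneSubTangent y' z := by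
  have hu : 0 < 1 - y' := by linarith
  have hu' : 0 < 1 - y := by linarith
  have key : invOneSubTangent y' z - invOneSubTangent y z =
      (y' - y) * ((z - y') * (1 - y) + (z - y) * (1 - y')) /
        ((1 - y) ^ 2 * (1 - y') ^ 2) := by
    unfold invOneSubTangent
    field_simp
    ring
  rw [← sub_nonneg, key]
  have hz : 0 ≤ (z - y') * (1 - y) + (z - y) * (1 - y') :=
    add_nonneg (mul_nonneg (sub_nonneg.2 hy'z) hu'.le)
      (mul_nonneg (sub_nonneg.2 (hyy'.trans hy'z)) hu.le)
  exact div_nonneg (mul_nonneg (sub_nonneg.2 hyy') hz) (by positivity)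

section Pdelta

variable {δ z : ℝ}

lemma Pdelta_of_le_half (hz : z ≤ 1 / 2) : Pdelta δ z = 2 := if_pos hz

lemma Pdelta_of_half_lt_of_le (hz : 1 / 2 < z) (hz' : z ≤ 1 - δ) : Pdelta δ z = 1 / (1 - z) := by
  rw [Pdelta, if_neg hz.not_ge, if_pos hz']

lemma Pdelta_of_one_sub_lt (hδ : δ < 1 / 2) (hz : 1 - δ < z) :
    Pdelta δ z = invOneSubTangent (1 - δ) z := by
  rw [Pdelta, if_neg (by linarith), if_neg hz.not_ge, invOneSubTangent, sub_sub_cancel, add_comm]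
  ring

lemma Pdelta_of_half_lt (hδ : δ < 1 / 2) (hz : 1 / 2 < z) :
    Pdelta δ z = invOneSubTangent (min z (1 - δ)) z := by
  rcases le_or_gt z (1 - δ) with hz' | hz'
  · rw [min_eq_left hz', Pdelta_of_half_lt_of_le hz hz', invOneSubTangent, sub_self, zero_div,
      add_zero]
  · rw [min_eq_right hz'.le, Pdelta_of_one_sub_lt hδ hz']

lemma two_le_Pdelta (hδ : δ ∈ Set.Ioo (0 : ℝ) (1 / 2)) (z : ℝ) : 2 ≤ Pdelta δ z := by
  obtain ⟨hδ0, hδ1⟩ := hδ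
  unfold Pdelta
  split_ifs
  · exact le_rfl
  · rw [le_div_iff₀ (by linarith)]
    linarith
  · have : 2 ≤ 1 / δ := by
      rw [le_div_iff₀ hδ0]
      linarith
    have : 0 ≤ (z - 1 + δ) / δ ^ 2 := div_nonneg (by linarith) (sq_nonneg δ)
    linarith

lemma invOneSubTangent_le_Pdelta (hδ : δ ∈ Set.Ioo (0 : ℝ) (1 / 2)) {y : ℝ} (hy : y ≤ 1 - δ)
    (z : ℝ) : invOneSubTangent y z ≤ Pdelta δ z := by
  obtain ⟨hδ0, hδ1⟩ := hδ
  rcases le_or_gt z (1 - δ) with hz' | hz'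
  · have hT := invOneSubTangent_le (by linarith : y < 1) (by linarith : z < 1)
    rcases le_or_gt z (1 / 2) with hz'' | hz''
    · rw [Pdelta_of_le_half hz'']
      refine hT.trans ?_
      rw [div_le_iff₀ (by linarith)]
      linarith
    · rwa [Pdelta_of_half_lt_of_le hz'' hz']
  · rw [Pdelta_of_one_sub_lt hδ1 hz']
    exact invOneSubTangent_le_invOneSubTangent hy (by linarith) hz'.le

lemma convexOn_Pdelta (hδ : δ ∈ Set.Ioo (0 : ℝ) (1 / 2)) :
    ConvexOn ℝ (Set.Icc 0 1) (Pdelta δ) := by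
  refine convexOn_of_forall_exists_add_mul_le (convex_Icc 0 1) fun y _ => ?_
  rcases le_or_gt y (1 / 2) with hy | hy
  · exact ⟨0, fun z _ => by simpa [Pdelta_of_le_half hy] using two_le_Pdelta hδ z⟩
  refine ⟨1 / (1 - min y (1 - δ)) ^ 2, fun z _ => ?_⟩
  rw [Pdelta_of_half_lt hδ.2 hy, invOneSubTangent_add_mul]
  exact invOneSubTangent_le_Pdelta hδ (min_le_right _ _) z

lemma monotoneOn_Pdelta (hδ : δ ∈ Set.Ioo (0 : ℝ) (1 / 2)) :
    MonotoneOn (Pdelta δ) (Set.Icc 0 1) :=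
  (convexOn_Pdelta hδ).monotoneOn_of_isMinOn ⟨le_rfl, zero_le_one⟩ (fun _ hx => hx.1)
    fun z _ => by rw [Pdelta_of_le_half (by norm_num)]; exact two_le_Pdelta hδ z

end Pdelta

section Profit

variable {δ x : ℝ}

/-- The battery's profit `x (P(1-x) - P(x))`, up to the factor `1/2`. -/
noncomputable def profit (δ x : ℝ) : ℝ := x * (Pdelta δ (1 - x) - Pdelta δ x)

lemma profit_of_lt (hδ : δ ∈ Set.Ioo (0 : ℝ) (1 / 2)) (hx : x < δ) :
    profit δ x = (1 - δ) ^ 2 - (x - (δ - δ ^ 2)) ^ 2 / δ ^ 2 := by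
  obtain ⟨hδ0, hδ1⟩ := hδ
  rw [profit, Pdelta_of_le_half (z := x) (by linarith), Pdelta_of_one_sub_lt hδ1 (by linarith),
    invOneSubTangent, sub_sub_cancel]
  field_simp
  ring

lemma profit_of_le (hδ : 0 < δ) (hδx : δ ≤ x) (hx : x ≤ 1 / 2) : profit δ x = 1 - 2 * x := by
  rcases hx.lt_or_eq with hx' | rfl
  · have hx0 : x ≠ 0 := by linarith
    rw [profit, Pdelta_of_le_half hx, Pdelta_of_half_lt_of_le (by linarith) (by linarith),
      sub_sub_cancel]
    field_simp
  · norm_num [profit, Pdelta_of_le_half]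

lemma profit_lt_profit_of_ne (hδ : δ ∈ Set.Ioo (0 : ℝ) (1 / 2)) (hx : x ≤ 1 / 2)
    (hne : x ≠ δ - δ ^ 2) : profit δ x < profit δ (δ - δ ^ 2) := by
  obtain ⟨hδ0, hδ1⟩ := hδ
  rw [profit_of_lt (x := δ - δ ^ 2) ⟨hδ0, hδ1⟩ (by nlinarith), sub_self, zero_pow two_ne_zero,
    zero_div, sub_zero]
  rcases lt_or_ge x δ with hxδ | hxδ
  · rw [profit_of_lt ⟨hδ0, hδ1⟩ hxδ, sub_lt_self_iff]
    exact div_pos (pow_two_pos_of_ne_zero (sub_ne_zero.2 hne)) (by positivity)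
  · rw [profit_of_le hδ0 hxδ hx]
    nlinarith

end Profit

/-- For `δ ∈ (0, 1/2)`, the price function `P_δ` is nondecreasing and convex
on `[0,1]`, and the profit `x ↦ x·(P_δ(1−x) − P_δ(x))` on `[0,1/2]` attains
its maximum at the unique point `x = δ − δ²`. -/
theorem stmt4 (δ : ℝ) (hδ : δ ∈ Set.Ioo (0 : ℝ) (1 / 2)) :
    MonotoneOn (Pdelta δ) (Set.Icc 0 1) ∧
    ConvexOn ℝ (Set.Icc 0 1) (Pdelta δ) ∧
    (∀ x ∈ Set.Icc (0 : ℝ) (1 / 2),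
      x * (Pdelta δ (1 - x) - Pdelta δ x) ≤
        (δ - δ ^ 2) * (Pdelta δ (1 - (δ - δ ^ 2)) - Pdelta δ (δ - δ ^ 2))) ∧
    (∀ x ∈ Set.Icc (0 : ℝ) (1 / 2),
      x * (Pdelta δ (1 - x) - Pdelta δ x) =
        (δ - δ ^ 2) * (Pdelta δ (1 - (δ - δ ^ 2)) - Pdelta δ (δ - δ ^ 2)) →
      x = δ - δ ^ 2) := by
  refine ⟨monotoneOn_Pdelta hδ, convexOn_Pdelta hδ, fun x hx => ?_, fun x hx heq => ?_⟩
  · rcases eq_or_ne x (δ - δ ^ 2) with rfl | hne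
    · exact le_rfl
    · exact (profit_lt_profit_of_ne hδ hx.2 hne).le
  · by_contra hne
    exact (profit_lt_profit_of_ne hδ hx.2 hne).ne heq
end

section
/- Fix a positive integer d and x, ε ∈ (0,1). Set t₁ = xε/(1 − x(1−ε)), and for k ∈ [0,1] define N₁(k) = 1 − k(1−x), N₂(k) = (1−ε)x + kεx and Z(k) = t₁·k·(1−x)·(N₁(k)^d − N₂(k)^d). Then every maximizer k* of Z over [0,1] satisfies k* ≥ (2 + d(1−x) − √(d²(1−x)² + 4x)) / (2(d+1)(1−x)). -/
/-!
Write `a = 1 - x`. Since `N₁ - N₂ = (1 - k)(1 - x(1 - ε))` and `t₁ (1 - x(1 - ε)) = xε`, the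
geometric-sum factorisation of `N₁^d - N₂^d` gives
`Z(k) = xε(1 - x) · k(1 - k)(1 - ka)^(d-1) · ∑_{i<d} (N₂/N₁)^i`.
The ratio `N₂/N₁` increases with `k`, so the sum is positive and nondecreasing, while
`(1 - ka) · (k(1 - k)(1 - ka)^(d-1))' = (1 - ka)^(d-1) · ((d+1)a k² - (2 + da) k + 1)`
is positive left of the smaller root `κ` of the quadratic. Hence `Z` strictly increases on
`[0, κ]`, and as `κ ≤ 1` no maximizer lies below `κ`.
-/

open Finset

lemma pow_succ_sub_pow_succ_eq_mul_geom_sum_div {K : Type*} [Field K] {u : K} (hu : u ≠ 0)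
    (v : K) (m : ℕ) :
    u ^ (m + 1) - v ^ (m + 1) = (u - v) * u ^ m * ∑ i ∈ range (m + 1), (v / u) ^ i := by
  have h := mul_neg_geom_sum (v / u) (m + 1)
  rw [div_pow] at h
  field_simp at h
  apply mul_left_cancel₀ hu
  linear_combination -h

lemma geom_sum_le_geom_sum {R : Type*} [Semiring R] [PartialOrder R] [IsOrderedRing R]
    {r s : R} (hr : 0 ≤ r) (hrs : r ≤ s) (n : ℕ) :
    ∑ i ∈ range n, r ^ i ≤ ∑ i ∈ range n, s ^ i :=
  sum_le_sum fun i _ => pow_le_pow_left₀ hr hrs i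

lemma quadratic_pos_of_lt_smaller_root {p q k : ℝ} (hp : 0 < p) (hD : 0 ≤ q ^ 2 - 4 * p)
    (hk : k < (q - √(q ^ 2 - 4 * p)) / (2 * p)) : 0 < p * k ^ 2 - q * k + 1 := by
  set s := √(q ^ 2 - 4 * p)
  have hs : s ^ 2 = q ^ 2 - 4 * p := Real.sq_sqrt hD
  have hroots : p * k ^ 2 - q * k + 1
      = p * ((q - s) / (2 * p) - k) * ((q + s) / (2 * p) - k) := by
    field_simp
    linear_combination hs
  have hle : (q - s) / (2 * p) ≤ (q + s) / (2 * p) := by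
    gcongr
    linarith [Real.sqrt_nonneg (q ^ 2 - 4 * p)]
  rw [hroots]
  have := sub_pos.2 hk
  have := sub_pos.2 (hk.trans_le hle)
  positivity

lemma hasDerivAt_mul_one_sub_mul_pow (a : ℝ) (m : ℕ) (k : ℝ) :
    HasDerivAt (fun k => k * (1 - k) * (1 - k * a) ^ m)
      ((1 - 2 * k) * (1 - k * a) ^ m - k * (1 - k) * (m * (1 - k * a) ^ (m - 1) * a)) k := by
  have h₁ := (hasDerivAt_id' k).fun_mul ((hasDerivAt_id' k).const_sub 1)
  have h₂ := (((hasDerivAt_id' k).mul_const a).const_sub 1).fun_pow m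
  exact (h₁.fun_mul h₂).congr_deriv (by ring)

lemma strictMonoOn_mul_one_sub_mul_pow {a κ : ℝ} (m : ℕ)
    (hN : ∀ k ∈ Set.Ioo 0 κ, 0 < 1 - k * a)
    (hQ : ∀ k ∈ Set.Ioo 0 κ, 0 < (m + 1 + 1) * a * k ^ 2 - (2 + (m + 1) * a) * k + 1) :
    StrictMonoOn (fun k => k * (1 - k) * (1 - k * a) ^ m) (Set.Icc 0 κ) := by
  refine strictMonoOn_of_hasDerivWithinAt_pos (convex_Icc 0 κ) (by fun_prop)
    (fun k _ => (hasDerivAt_mul_one_sub_mul_pow a m k).hasDerivWithinAt) fun k hk => ?_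
  rw [interior_Icc] at hk
  have hpow : (m : ℝ) * ((1 - k * a) * (1 - k * a) ^ (m - 1)) = m * (1 - k * a) ^ m := by
    rcases eq_or_ne m 0 with rfl | hm
    · simp
    · rw [mul_pow_sub_one hm]
  have hderiv : (1 - k * a) * ((1 - 2 * k) * (1 - k * a) ^ m
      - k * (1 - k) * (m * (1 - k * a) ^ (m - 1) * a))
      = (1 - k * a) ^ m * ((m + 1 + 1) * a * k ^ 2 - (2 + (m + 1) * a) * k + 1) := by
    linear_combination (-(k * (1 - k) * a)) * hpow
  have := hN k hk
  have := hQ k hk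
  exact pos_of_mul_pos_right (hderiv ▸ by positivity) (hN k hk).le

noncomputable def stepRevenue (x ε : ℝ) (d : ℕ) (k : ℝ) : ℝ :=
  x * ε / (1 - x * (1 - ε)) * k * (1 - x) *
    ((1 - k * (1 - x)) ^ d - ((1 - ε) * x + k * ε * x) ^ d)

noncomputable def stepRevenueBound (d : ℕ) (x : ℝ) : ℝ :=
  (2 + d * (1 - x) - √(d ^ 2 * (1 - x) ^ 2 + 4 * x)) / (2 * (d + 1) * (1 - x))

lemma quadratic_pos_of_lt_stepRevenueBound {d : ℕ} {x k : ℝ} (hx : x ∈ Set.Ioo (0 : ℝ) 1)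
    (hk : k < stepRevenueBound d x) :
    0 < (d + 1) * (1 - x) * k ^ 2 - (2 + d * (1 - x)) * k + 1 := by
  have hdisc : (2 + d * (1 - x)) ^ 2 - 4 * ((d + 1) * (1 - x)) = d ^ 2 * (1 - x) ^ 2 + 4 * x := by
    ring
  refine quadratic_pos_of_lt_smaller_root (mul_pos (by positivity) (by linarith [hx.2]))
    (by rw [hdisc]; nlinarith [hx.1]) ?_
  rwa [hdisc, ← mul_assoc]

lemma stepRevenueBound_le_one {d : ℕ} {x : ℝ} (hx : x ∈ Set.Ioo (0 : ℝ) 1) :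
    stepRevenueBound d x ≤ 1 := by
  by_contra! h
  nlinarith [quadratic_pos_of_lt_stepRevenueBound hx h, hx.1]

lemma stepRevenue_eq {x ε k : ℝ} (m : ℕ) (hN : 1 - k * (1 - x) ≠ 0)
    (hc : 1 - x * (1 - ε) ≠ 0) :
    stepRevenue x ε (m + 1) k
      = x * ε * (1 - x) * (k * (1 - k) * (1 - k * (1 - x)) ^ m *
        ∑ i ∈ range (m + 1), (((1 - ε) * x + k * ε * x) / (1 - k * (1 - x))) ^ i) := by
  rw [stepRevenue, pow_succ_sub_pow_succ_eq_mul_geom_sum_div hN]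
  field_simp
  ring

lemma stepRevenue_strictMonoOn {x ε : ℝ} (hx : x ∈ Set.Ioo (0 : ℝ) 1)
    (hε : ε ∈ Set.Ioo (0 : ℝ) 1) (m : ℕ) :
    StrictMonoOn (stepRevenue x ε (m + 1)) (Set.Icc 0 (stepRevenueBound (m + 1) x)) := by
  have hκ1 := stepRevenueBound_le_one (d := m + 1) hx
  obtain ⟨hx0, hx1⟩ := hx
  obtain ⟨hε0, hε1⟩ := hε
  set κ := stepRevenueBound (m + 1) x
  set g : ℝ → ℝ := fun k => k * (1 - k) * (1 - k * (1 - x)) ^ m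
  set r : ℝ → ℝ := fun k => ((1 - ε) * x + k * ε * x) / (1 - k * (1 - x))
  have hg : StrictMonoOn g (Set.Icc 0 κ) := by
    refine strictMonoOn_mul_one_sub_mul_pow m (fun k hk => by nlinarith [hk.2]) fun k hk => ?_
    exact_mod_cast quadratic_pos_of_lt_stepRevenueBound ⟨hx0, hx1⟩ hk.2
  have hN₁ : ∀ k ∈ Set.Icc 0 κ, 0 < 1 - k * (1 - x) := fun k hk => by nlinarith [hk.2]
  have hN₂ : ∀ k ∈ Set.Icc 0 κ, 0 ≤ (1 - ε) * x + k * ε * x := fun k hk => by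
    nlinarith [mul_pos (sub_pos.2 hε1) hx0, mul_nonneg (mul_nonneg hk.1 hε0.le) hx0.le]
  intro k hk k' hk' hkk'
  have hr₀ : 0 ≤ r k := div_nonneg (hN₂ k hk) (hN₁ k hk).le
  have hr : r k ≤ r k' :=
    div_le_div₀ (hN₂ k' hk') (by nlinarith [mul_pos hε0 hx0]) (hN₁ k' hk') (by nlinarith)
  have hgk' : 0 ≤ g k' :=
    mul_nonneg (mul_nonneg hk'.1 (by linarith [hk'.2])) (pow_nonneg (hN₁ k' hk').le m)
  rw [stepRevenue_eq m (hN₁ k hk).ne' (by nlinarith),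
    stepRevenue_eq m (hN₁ k' hk').ne' (by nlinarith)]
  exact mul_lt_mul_of_pos_left (mul_lt_mul (hg hk hk' hkk') (geom_sum_le_geom_sum hr₀ hr _)
    (geom_sum_pos hr₀ m.succ_ne_zero) hgk') (by positivity)

/-- Lower bound on the revenue-maximizing policy in the step-demand monomial
model: with `t₁ = xε/(1−x(1−ε))`, `N₁(k) = 1 − k(1−x)`, `N₂(k) = (1−ε)x + kεx`
and revenue `Z(k) = t₁·k·(1−x)·(N₁(k)^d − N₂(k)^d)`, every maximizer `k*` of
`Z` on `[0,1]` satisfies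
`k* ≥ (2 + d(1−x) − √(d²(1−x)² + 4x)) / (2(d+1)(1−x))`. -/
theorem stmt8 (d : ℕ) (hd : 0 < d)
    (x ε : ℝ) (hx : x ∈ Set.Ioo (0 : ℝ) 1) (hε : ε ∈ Set.Ioo (0 : ℝ) 1)
    (t₁ : ℝ) (ht₁ : t₁ = x * ε / (1 - x * (1 - ε)))
    (N₁ N₂ Z : ℝ → ℝ)
    (hN₁ : ∀ k, N₁ k = 1 - k * (1 - x))
    (hN₂ : ∀ k, N₂ k = (1 - ε) * x + k * ε * x)
    (hZ : ∀ k, Z k = t₁ * k * (1 - x) * ((N₁ k) ^ d - (N₂ k) ^ d))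
    (kstar : ℝ) (hks : kstar ∈ Set.Icc (0 : ℝ) 1)
    (hmax : ∀ k ∈ Set.Icc (0 : ℝ) 1, Z k ≤ Z kstar) :
    kstar ≥ (2 + (d : ℝ) * (1 - x) - Real.sqrt ((d : ℝ) ^ 2 * (1 - x) ^ 2 + 4 * x)) /
      (2 * ((d : ℝ) + 1) * (1 - x)) := by
  obtain ⟨m, rfl⟩ : ∃ m, d = m + 1 := ⟨d - 1, by omega⟩
  have hZ' : Z = stepRevenue x ε (m + 1) := funext fun k => by
    rw [hZ, hN₁, hN₂, ht₁, stepRevenue]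
  change stepRevenueBound (m + 1) x ≤ kstar
  by_contra! hlt
  have hκ0 : 0 ≤ stepRevenueBound (m + 1) x := hks.1.trans hlt.le
  refine (hmax _ ⟨hκ0, stepRevenueBound_le_one hx⟩).not_gt ?_
  rw [hZ']
  exact stepRevenue_strictMonoOn hx hε m ⟨hks.1, hlt.le⟩ ⟨hκ0, le_rfl⟩ hlt
end

section
/- Fix a positive integer d and x, ε ∈ (0,1). Set t₁ = xε/(1 − x(1−ε)), and for k ∈ [0,1] define N₁(k) = 1 − k(1−x), N₂(k) = (1−ε)x + kεx and ψ(k) = t₁·N₁(k)^{d+1} + (1−t₁)·N₂(k)^{d+1}. Then ψ is strictly decreasing on [0,1]. Consequently, the welfare improvement k ↦ ψ(0) − ψ(k) is strictly increasing, and the ratio k ↦ (ψ(0) − ψ(1))/(ψ(0) − ψ(k)) is monotonically decreasing on (0,1]. -/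
/-!
With `p = 1` and `q = (1 - ε) x` the no-battery demands, the choice of `t₁` makes the
weighted mean `t₁ p + (1 - t₁) q` equal to `x`, and `N₁ k`, `N₂ k` are the points at parameter
`k` on the segments from `p` and from `q` to that mean. So `ψ` is strictly convex in `k`, and by
Jensen's inequality it is minimal at `k = 1`, where both demands equal the mean. A strictly
convex function decreases strictly up to its minimiser.
-/

open Set AffineMap

section

variable {𝕜 E F β : Type*} [Field 𝕜] [LinearOrder 𝕜]

theorem StrictConvexOn.comp_affineMap [AddCommGroup E] [AddCommGroup F] [Module 𝕜 E]
    [Module 𝕜 F] [AddCommMonoid β] [PartialOrder β] [SMul 𝕜 β] {f : F → β} {s : Set F}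
    (hf : StrictConvexOn 𝕜 s f) (g : E →ᵃ[𝕜] F) (hg : Function.Injective g) :
    StrictConvexOn 𝕜 (g ⁻¹' s) (f ∘ g) :=
  ⟨hf.1.affine_preimage g, fun x hx y hy hxy a b ha hb hab => by
    simpa only [Function.comp_apply, Convex.combo_affine_apply hab] using
      hf.2 hx hy (hg.ne hxy) ha hb hab⟩

theorem StrictConvexOn.smul [AddCommMonoid E] [SMul 𝕜 E] [AddCommMonoid β] [PartialOrder β]
    [Module 𝕜 β] [PosSMulStrictMono 𝕜 β] {f : E → β} {s : Set E} {c : 𝕜} (hc : 0 < c)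
    (hf : StrictConvexOn 𝕜 s f) : StrictConvexOn 𝕜 s fun x => c • f x :=
  ⟨hf.1, fun x hx y hy hxy a b ha hb hab =>
    calc
      c • f (a • x + b • y) < c • (a • f x + b • f y) :=
        smul_lt_smul_of_pos_left (hf.2 hx hy hxy ha hb hab) hc
      _ = a • c • f x + b • c • f y := by rw [smul_add, smul_comm c, smul_comm c]⟩

section

variable [IsStrictOrderedRing 𝕜]

theorem StrictConvexOn.strictAntiOn_of_isMinOn {f : 𝕜 → 𝕜} {s : Set 𝕜} {m : 𝕜}
    (hf : StrictConvexOn 𝕜 s f) (hm : m ∈ s) (hmin : IsMinOn f s m) :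
    StrictAntiOn f (s ∩ Iic m) := by
  have hlt : ∀ u ∈ s, u ≠ m → f m < f u := fun u hu hne =>
    (hmin hu).lt_of_ne fun heq => hne <|
      hf.eq_of_isMinOn (fun w hw => heq ▸ hmin hw) hmin hu hm
  intro u hu v hv huv
  rcases hv.2.eq_or_lt with rfl | hvm
  · exact hlt u hu.1 huv.ne
  · exact hf.convexOn.strictAntiOn hm hvm (hlt v hv.1 hvm.ne) ⟨hu.1, huv.le⟩ ⟨hv.1, le_rfl⟩
      huv

theorem MonotoneOn.antitoneOn_const_div {α : Type*} [Preorder α] {g : α → 𝕜} {s : Set α}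
    {c : 𝕜} (hg : MonotoneOn g s) (hc : 0 ≤ c) (hpos : ∀ k ∈ s, 0 < g k) : AntitoneOn (fun k => c / g k) s :=
  fun _ ha _ hb hab => div_le_div_of_nonneg_left hc (hpos _ ha) (hg ha hb hab)

theorem StrictConvexOn.strictAntiOn_mixture_lineMap_weightedMean {f : 𝕜 → 𝕜} {s : Set 𝕜}
    (hf : StrictConvexOn 𝕜 s f) {t p q : 𝕜} (ht₀ : 0 < t) (ht₁ : t < 1) (hp : p ∈ s)
    (hq : q ∈ s) (hpq : p ≠ q) :
    StrictAntiOn (fun k : 𝕜 => t * f (lineMap p (t * p + (1 - t) * q) k)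
      + (1 - t) * f (lineMap q (t * p + (1 - t) * q) k)) (Icc (0 : 𝕜) 1) := by
  set m := t * p + (1 - t) * q with hm_def
  have hm : m ∈ s := hf.1 hp hq ht₀.le (by linarith) (by ring)
  have hpm : p ≠ m := fun h =>
    hpq (mul_left_cancel₀ (sub_pos.2 ht₁).ne' (by linear_combination h + hm_def))
  have hqm : q ≠ m := fun h =>
    hpq (mul_left_cancel₀ ht₀.ne' (by linear_combination -h - hm_def))
  have hsub : ∀ {a}, a ∈ s → Icc (0 : 𝕜) 1 ⊆ lineMap a m ⁻¹' s := fun ha _ hk =>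
    hf.1.lineMap_mem ha hm hk
  have hconv : StrictConvexOn 𝕜 (Icc (0 : 𝕜) 1) fun k => t * f (lineMap p m k)
      + (1 - t) * f (lineMap q m k) :=
    (((hf.comp_affineMap _ (lineMap_injective 𝕜 hpm)).subset (hsub hp) (convex_Icc 0 1)).smul
      ht₀).add
    (((hf.comp_affineMap _ (lineMap_injective 𝕜 hqm)).subset (hsub hq) (convex_Icc 0 1)).smul
      (sub_pos.2 ht₁))
  have hmin : IsMinOn (fun k : 𝕜 => t * f (lineMap p m k) + (1 - t) * f (lineMap q m k))
      (Icc (0 : 𝕜) 1) 1 := fun k hk => by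
    have hmean : t * lineMap p m k + (1 - t) * lineMap q m k = m := by
      simp only [lineMap_apply_ring, m]; ring
    have hjensen := hf.convexOn.2 (hsub hp hk) (hsub hq hk) ht₀.le (sub_pos.2 ht₁).le
      (add_sub_cancel t 1)
    simp only [mem_ofPred_eq, lineMap_apply_one, ← add_mul, add_sub_cancel, one_mul]
    simpa only [smul_eq_mul, hmean] using hjensen
  have := hconv.strictAntiOn_of_isMinOn (right_mem_Icc.2 zero_le_one) hmin
  rwa [inter_eq_left.2 fun _ hk => hk.2] at this

end

end

/-- In the step-demand monomial model, the social cost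
`ψ(k) = t₁·N₁(k)^{d+1} + (1−t₁)·N₂(k)^{d+1}` is strictly decreasing on
`[0,1]`; consequently the welfare improvement `k ↦ ψ(0) − ψ(k)` is strictly
increasing on `[0,1]` and the ratio `k ↦ (ψ(0) − ψ(1))/(ψ(0) − ψ(k))` is
monotonically decreasing on `(0,1]`. -/
theorem stmt9 (d : ℕ) (hd : 0 < d)
    (x ε : ℝ) (hx : x ∈ Set.Ioo (0 : ℝ) 1) (hε : ε ∈ Set.Ioo (0 : ℝ) 1)
    (t₁ : ℝ) (ht₁ : t₁ = x * ε / (1 - x * (1 - ε)))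
    (N₁ N₂ ψ : ℝ → ℝ)
    (hN₁ : ∀ k, N₁ k = 1 - k * (1 - x))
    (hN₂ : ∀ k, N₂ k = (1 - ε) * x + k * ε * x)
    (hψ : ∀ k, ψ k = t₁ * (N₁ k) ^ (d + 1) + (1 - t₁) * (N₂ k) ^ (d + 1)) :
    StrictAntiOn ψ (Set.Icc 0 1) ∧
    StrictMonoOn (fun k => ψ 0 - ψ k) (Set.Icc 0 1) ∧
    AntitoneOn (fun k => (ψ 0 - ψ 1) / (ψ 0 - ψ k)) (Set.Ioc 0 1) := by
  obtain ⟨hx₀, hx₁⟩ := hx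
  obtain ⟨hε₀, hε₁⟩ := hε
  have hden : 0 < 1 - x * (1 - ε) := by nlinarith
  have ht₁₀ : 0 < t₁ := by rw [ht₁]; positivity
  have ht₁₁ : t₁ < 1 := by rw [ht₁, div_lt_one hden]; nlinarith
  have hmean : t₁ * 1 + (1 - t₁) * ((1 - ε) * x) = x := by rw [ht₁]; field_simp; ring
  have hmix :=
    (strictConvexOn_pow (by omega : 2 ≤ d + 1)).strictAntiOn_mixture_lineMap_weightedMean ht₁₀
      ht₁₁ (mem_Ici.2 zero_le_one) (mem_Ici.2 (by positivity))
      (by nlinarith : (1 : ℝ) ≠ (1 - ε) * x)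
  rw [hmean] at hmix
  have hψ_lineMap : ∀ k, ψ k = t₁ * lineMap 1 x k ^ (d + 1)
      + (1 - t₁) * lineMap ((1 - ε) * x) x k ^ (d + 1) := fun k => by
    rw [hψ, hN₁, hN₂, lineMap_apply_ring, lineMap_apply_ring]
    ring
  have hanti : StrictAntiOn ψ (Icc 0 1) := by
    rw [funext hψ_lineMap]
    exact hmix
  have himp : StrictMonoOn (fun k => ψ 0 - ψ k) (Icc 0 1) := fun a ha b hb hab =>
    sub_lt_sub_left (hanti ha hb hab) _
  have hpos : ∀ k ∈ Ioc (0 : ℝ) 1, 0 < ψ 0 - ψ k := fun k hk => by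
    simpa using himp (left_mem_Icc.2 zero_le_one) (Ioc_subset_Icc_self hk) hk.1
  exact ⟨hanti, himp, (himp.monotoneOn.mono Ioc_subset_Icc_self).antitoneOn_const_div
    (hpos 1 (right_mem_Ioc.2 one_pos)).le hpos⟩
end

section
/- Fix a positive integer d, x ∈ (0,1) and k ∈ (0,1). For ε ∈ (0,1) set t₁(ε) = xε/(1 − x(1−ε)), N₁(k) = 1 − k(1−x), N₂(ε, k) = (1−ε)x + kεx and ψ_ε(k) = t₁(ε)·N₁(k)^{d+1} + (1 − t₁(ε))·N₂(ε, k)^{d+1}. Then the function ε ↦ (ψ_ε(0) − ψ_ε(1)) / (ψ_ε(0) − ψ_ε(k)) is monotonically increasing on (0,1). -/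
/-!
After cancelling the common factor `x / (1 - x(1 - ε))`, the ratio is `gain d x 1 / gain d x k`,
a quotient of two functions vanishing at `ε = 0`. By the monotone form of l'Hôpital's rule it is
monotone as soon as `gainDeriv d x 1 s * gainDeriv d x k t ≤ gainDeriv d x 1 t * gainDeriv d x k s`
for `s ≤ t`. Writing `β = 1 - k`, this cross inequality follows from three elementary facts about
powers on `[0, 1]`: convexity of `u ↦ u ^ (d + 1)`, Bernoulli's inequality, and the monotonicity of
`z ↦ (1 - (1 - β z) ^ d) / (1 - (1 - z) ^ d)`, itself a second instance of the same l'Hôpital rule.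
-/

open Set Finset

theorem monotoneOn_div_of_deriv_cross {f g f' g' : ℝ → ℝ} {a b : ℝ}
    (hf : ∀ t ∈ Icc a b, HasDerivAt f (f' t) t) (hg : ∀ t ∈ Icc a b, HasDerivAt g (g' t) t)
    (hfa : f a = 0) (hga : g a = 0) (hg_pos : ∀ t ∈ Ioc a b, 0 < g t)
    (hcross : ∀ s ∈ Icc a b, ∀ t ∈ Icc a b, s ≤ t → f' s * g' t ≤ f' t * g' s) :
    MonotoneOn (fun t => f t / g t) (Ioc a b) := by
  have hwronskian : ∀ t ∈ Icc a b, f t * g' t ≤ f' t * g t := by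
    intro t ht
    have hsub : Icc a t ⊆ Icc a b := Icc_subset_Icc_right ht.2
    -- `s ↦ f' t * g s - g' t * f s` vanishes at `a` and is monotone on `[a, t]` by `hcross`
    have hmono : MonotoneOn (fun s => f' t * g s - g' t * f s) (Icc a t) := by
      refine monotoneOn_of_hasDerivWithinAt_nonneg (f' := fun s => f' t * g' s - g' t * f' s)
        (convex_Icc a t) (fun s hs => ?_) (fun s hs => ?_) (fun s hs => ?_)
      · exact (((hg s (hsub hs)).const_mul _).sub
          ((hf s (hsub hs)).const_mul _)).continuousAt.continuousWithinAt
      · rw [interior_Icc] at hs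
        exact (((hg s (hsub (Ioo_subset_Icc_self hs))).const_mul _).sub
          ((hf s (hsub (Ioo_subset_Icc_self hs))).const_mul _)).hasDerivWithinAt
      · rw [interior_Icc] at hs
        have := hcross s (hsub (Ioo_subset_Icc_self hs)) t ht hs.2.le
        linarith
    have := hmono (left_mem_Icc.2 ht.1) (right_mem_Icc.2 ht.1) ht.1
    simp only [hfa, hga, mul_zero, sub_zero] at this
    linarith
  refine monotoneOn_of_hasDerivWithinAt_nonneg
    (f' := fun t => (f' t * g t - f t * g' t) / g t ^ 2) (convex_Ioc a b)
    (fun t ht => ?_) (fun t ht => ?_) (fun t ht => ?_)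
  · exact ((hf t (Ioc_subset_Icc_self ht)).div (hg t (Ioc_subset_Icc_self ht))
      (hg_pos t ht).ne').continuousAt.continuousWithinAt
  · rw [interior_Ioc] at ht
    exact ((hf t (Ioo_subset_Icc_self ht)).div (hg t (Ioo_subset_Icc_self ht))
      (hg_pos t (Ioo_subset_Ioc_self ht)).ne').hasDerivWithinAt
  · rw [interior_Ioc] at ht
    exact div_nonneg (sub_nonneg.2 (hwronskian t (Ioo_subset_Icc_self ht))) (sq_nonneg _)

theorem hasDerivAt_one_sub_one_sub_mul_pow (n : ℕ) (β z : ℝ) :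
    HasDerivAt (fun z => 1 - (1 - β * z) ^ n) (n * (1 - β * z) ^ (n - 1) * β) z := by
  simpa using ((((hasDerivAt_id z).const_mul β).const_sub 1).pow n).const_sub 1

theorem monotoneOn_one_sub_pow_div {n : ℕ} (hn : n ≠ 0) {β : ℝ} (hβ₀ : 0 ≤ β) (hβ₁ : β ≤ 1) :
    MonotoneOn (fun z => (1 - (1 - β * z) ^ n) / (1 - (1 - z) ^ n)) (Ioc 0 1) := by
  refine monotoneOn_div_of_deriv_cross (fun z _ => hasDerivAt_one_sub_one_sub_mul_pow n β z)
    (fun z _ => by simpa using hasDerivAt_one_sub_one_sub_mul_pow n 1 z) (by simp) (by simp)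
    (fun z hz => sub_pos.2 (pow_lt_one₀ (by linarith [hz.2]) (by linarith [hz.1]) hn))
    (fun s hs t ht hst => ?_)
  -- the ratio of the derivatives is `β * ((1 - β z) / (1 - z)) ^ (n - 1)`, increasing in `z`
  have hbase : (1 - β * s) * (1 - t) ≤ (1 - β * t) * (1 - s) := by nlinarith
  have := pow_le_pow_left₀ (mul_nonneg (by nlinarith [hs.2]) (by linarith [ht.2])) hbase (n - 1)
  rw [mul_pow, mul_pow] at this
  have : 0 ≤ (n : ℝ) * β * n := by positivity
  nlinarith

theorem one_sub_pow_mul_one_sub_pow_le {n : ℕ} (hn : n ≠ 0) {β s t : ℝ} (hβ₀ : 0 ≤ β)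
    (hβ₁ : β ≤ 1) (hs : 0 ≤ s) (hst : s ≤ t) (ht : t ≤ 1) :
    (1 - (1 - t) ^ n) * (1 - (1 - β * s) ^ n) ≤ (1 - (1 - s) ^ n) * (1 - (1 - β * t) ^ n) := by
  rcases hs.eq_or_lt with rfl | hs
  · simp
  have hpos : ∀ z ∈ Ioc (0 : ℝ) 1, 0 < 1 - (1 - z) ^ n := fun z hz =>
    sub_pos.2 (pow_lt_one₀ (by linarith [hz.2]) (by linarith [hz.1]) hn)
  have := monotoneOn_one_sub_pow_div hn hβ₀ hβ₁ ⟨hs, hst.trans ht⟩ ⟨hs.trans_le hst, ht⟩ hst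
  rw [div_le_div_iff₀ (hpos s ⟨hs, hst.trans ht⟩) (hpos t ⟨hs.trans_le hst, ht⟩)] at this
  linarith

theorem mul_one_sub_pow_sub_one_sub_pow_le (n : ℕ) {β s t : ℝ} (hβ₀ : 0 ≤ β) (hβ₁ : β ≤ 1)
    (hs : 0 ≤ s) (hst : s ≤ t) (ht : t ≤ 1) :
    β * ((1 - s) ^ n - (1 - t) ^ n) ≤ (1 - β * s) ^ n - (1 - β * t) ^ n := by
  have hanti : AntitoneOn (fun u => (1 - β * u) ^ n - β * (1 - u) ^ n) (Icc 0 1) := by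
    have hderiv : ∀ u, HasDerivAt (fun u => (1 - β * u) ^ n - β * (1 - u) ^ n)
        (n * β * ((1 - u) ^ (n - 1) - (1 - β * u) ^ (n - 1))) u := fun u => by
      have h1 := (hasDerivAt_one_sub_one_sub_mul_pow n β u).const_sub 1
      have h2 := ((hasDerivAt_one_sub_one_sub_mul_pow n 1 u).const_sub 1).const_mul β
      simp only [sub_sub_cancel, one_mul] at h1 h2
      exact (h1.sub h2).congr_deriv (by ring)
    refine antitoneOn_of_hasDerivWithinAt_nonpos (convex_Icc 0 1)
      (fun u _ => (hderiv u).continuousAt.continuousWithinAt)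
      (fun u _ => (hderiv u).hasDerivWithinAt) (fun u hu => ?_)
    rw [interior_Icc] at hu
    have : (1 - u) ^ (n - 1) ≤ (1 - β * u) ^ (n - 1) :=
      pow_le_pow_left₀ (by linarith [hu.2]) (by nlinarith [hu.1]) _
    have : 0 ≤ (n : ℝ) * β := by positivity
    nlinarith
  have := hanti ⟨hs, hst.trans ht⟩ ⟨hs.trans hst, ht⟩ hst
  simp only at this
  linarith

theorem add_mul_pow_sub_pow_le (n : ℕ) {x β : ℝ} (hx₀ : 0 ≤ x) (hx₁ : x ≤ 1) (hβ₀ : 0 ≤ β)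
    (hβ₁ : β ≤ 1) :
    (β + (1 - β) * x) ^ (n + 1) - x ^ (n + 1)
      ≤ β ^ 2 * (1 - x ^ (n + 1)) + β * (1 - β) * ((n + 1) * (1 - x) * x ^ n) := by
  set C := β + (1 - β) * x
  have hconv : ∀ i : ℕ, C ^ i ≤ β + (1 - β) * x ^ i := fun i => by
    simpa using (convexOn_pow i).2 (mem_Ici.2 zero_le_one) (mem_Ici.2 hx₀) hβ₀
      (by linarith) (by ring)
  have hsum : ∑ i ∈ range (n + 1), C ^ i * x ^ (n - i)
      ≤ ∑ i ∈ range (n + 1), (β * x ^ (n - i) + (1 - β) * x ^ n) := by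
    refine sum_le_sum fun i hi => ?_
    have hxi : x ^ i * x ^ (n - i) = x ^ n := by
      rw [← pow_add, Nat.add_sub_cancel' (Nat.lt_succ_iff.1 (mem_range.1 hi))]
    calc C ^ i * x ^ (n - i) ≤ (β + (1 - β) * x ^ i) * x ^ (n - i) :=
          mul_le_mul_of_nonneg_right (hconv i) (pow_nonneg hx₀ _)
      _ = β * x ^ (n - i) + (1 - β) * x ^ n := by rw [← hxi]; ring
  rw [sum_add_distrib, ← mul_sum, sum_const, card_range, nsmul_eq_mul] at hsum
  have hC : (∑ i ∈ range (n + 1), C ^ i * x ^ (n - i)) * (C - x) = C ^ (n + 1) - x ^ (n + 1) := by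
    simpa using geom_sum₂_mul C x (n + 1)
  have h1 : (∑ i ∈ range (n + 1), x ^ (n - i)) * (1 - x) = 1 - x ^ (n + 1) := by
    simpa using geom_sum₂_mul (1 : ℝ) x (n + 1)
  calc C ^ (n + 1) - x ^ (n + 1)
      = (∑ i ∈ range (n + 1), C ^ i * x ^ (n - i)) * (β * (1 - x)) := by rw [← hC]; ring
    _ ≤ (β * ∑ i ∈ range (n + 1), x ^ (n - i) + (n + 1 : ℕ) * ((1 - β) * x ^ n))
          * (β * (1 - x)) :=
        mul_le_mul_of_nonneg_right hsum (mul_nonneg hβ₀ (by linarith))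
    _ = β ^ 2 * (1 - x ^ (n + 1)) + β * (1 - β) * ((n + 1) * (1 - x) * x ^ n) := by
        rw [← h1]; push_cast; ring

/-- `x / (1 - x (1 - ε)) * gain d x k ε` is the welfare improvement `ψ_ε(0) - ψ_ε(k)`. -/
noncomputable def gain (d : ℕ) (x k ε : ℝ) : ℝ :=
  (1 - (1 - k * (1 - x)) ^ (d + 1)) * ε
    - (1 - x) * x ^ d * ((1 - (1 - k) * ε) ^ (d + 1) - (1 - ε) ^ (d + 1))

noncomputable def gainDeriv (d : ℕ) (x k ε : ℝ) : ℝ :=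
  (1 - (1 - k * (1 - x)) ^ (d + 1))
    - (d + 1) * (1 - x) * x ^ d * ((1 - ε) ^ d - (1 - k) * (1 - (1 - k) * ε) ^ d)

theorem gain_zero (d : ℕ) (x k : ℝ) : gain d x k 0 = 0 := by
  simp [gain]

theorem hasDerivAt_gain (d : ℕ) (x k ε : ℝ) : HasDerivAt (gain d x k) (gainDeriv d x k ε) ε := by
  have h1 := (((hasDerivAt_id' ε).const_mul (1 - k)).const_sub 1).fun_pow (d + 1)
  have h2 := ((hasDerivAt_id' ε).const_sub 1).fun_pow (d + 1)
  refine (((hasDerivAt_id' ε).const_mul (1 - (1 - k * (1 - x)) ^ (d + 1))).sub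
    ((h1.sub h2).const_mul ((1 - x) * x ^ d))).congr_deriv ?_
  simp only [gainDeriv, Nat.add_sub_cancel, Nat.cast_succ]
  ring

theorem gain_pos {d : ℕ} (hd : d ≠ 0) {x k ε : ℝ} (hx₀ : 0 ≤ x) (hx₁ : x < 1) (hk₀ : 0 < k)
    (hk₁ : k < 1) (hε₀ : 0 < ε) (hε₁ : ε ≤ 1) : 0 < gain d x k ε := by
  set C := 1 - k * (1 - x)
  have hC : 0 ≤ C := by nlinarith
  have hP : 0 ≤ 1 - (1 - k) * ε := by nlinarith
  have h1 : (d + 1) * C ^ d * (k * (1 - x)) ≤ 1 - C ^ (d + 1) := by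
    have := pow_add_mul_le_add_pow hC (b := k * (1 - x)) (by nlinarith) (d + 1)
    simp only [Nat.add_sub_cancel, Nat.cast_succ, C, sub_add_cancel, one_pow] at this
    linarith
  have h2 : (1 - (1 - k) * ε) ^ (d + 1) - (1 - ε) ^ (d + 1)
      ≤ (d + 1) * (1 - (1 - k) * ε) ^ d * (k * ε) := by
    have := pow_add_mul_le_add_pow hP (b := -(k * ε)) (by nlinarith) (d + 1)
    simp only [Nat.add_sub_cancel, Nat.cast_succ] at this
    rw [show 1 - (1 - k) * ε + -(k * ε) = 1 - ε by ring] at this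
    linarith
  have h3 : (x * (1 - (1 - k) * ε)) ^ d < C ^ d :=
    pow_lt_pow_left₀ (by nlinarith [mul_pos (sub_pos.2 hk₁) (sub_pos.2 hx₁)])
      (mul_nonneg hx₀ hP) hd
  have hm : 0 ≤ (1 - x) * x ^ d := mul_nonneg (by linarith) (pow_nonneg hx₀ d)
  calc 0 < (d + 1) * k * (1 - x) * ε * (C ^ d - (x * (1 - (1 - k) * ε)) ^ d) := by
        have := sub_pos.2 h3
        have : 0 < 1 - x := by linarith
        positivity
    _ = (d + 1) * C ^ d * (k * (1 - x)) * ε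
          - (1 - x) * x ^ d * ((d + 1) * (1 - (1 - k) * ε) ^ d * (k * ε)) := by
        rw [mul_pow]; ring
    _ ≤ gain d x k ε := by
        unfold gain
        nlinarith [mul_le_mul_of_nonneg_right h1 hε₀.le, mul_le_mul_of_nonneg_left h2 hm]

theorem gainDeriv_one_mul_gainDeriv_le {d : ℕ} (hd : d ≠ 0) {x k s t : ℝ} (hx₀ : 0 ≤ x)
    (hx₁ : x ≤ 1) (hk₀ : 0 ≤ k) (hk₁ : k ≤ 1) (hs : 0 ≤ s) (hst : s ≤ t) (ht : t ≤ 1) :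
    gainDeriv d x 1 s * gainDeriv d x k t ≤ gainDeriv d x 1 t * gainDeriv d x k s := by
  have hβ₀ : 0 ≤ 1 - k := by linarith
  have hβ₁ : 1 - k ≤ 1 := by linarith
  have hD : 0 ≤ (1 - s) ^ d - (1 - t) ^ d :=
    sub_nonneg.2 (pow_le_pow_left₀ (by linarith) (by linarith) d)
  have hE := mul_one_sub_pow_sub_one_sub_pow_le d hβ₀ hβ₁ hs hst ht
  have hT := one_sub_pow_mul_one_sub_pow_le hd hβ₀ hβ₁ hs hst ht
  have hC := add_mul_pow_sub_pow_le d hx₀ hx₁ hβ₀ hβ₁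
  rw [show 1 - k + (1 - (1 - k)) * x = 1 - k * (1 - x) by ring] at hC
  have hm : 0 ≤ (d + 1) * (1 - x) * x ^ d := by
    have : 0 ≤ 1 - x := by linarith
    positivity
  have ham : (d + 1) * (1 - x) * x ^ d ≤ 1 - x ^ (d + 1) := by
    have := pow_add_mul_le_add_pow hx₀ (b := 1 - x) (by linarith) (d + 1)
    simp only [Nat.add_sub_cancel, Nat.cast_succ, add_sub_cancel, one_pow] at this
    linarith
  set a := 1 - x ^ (d + 1)
  set m := (d + 1) * (1 - x) * x ^ d
  set β := 1 - k
  set D := (1 - s) ^ d - (1 - t) ^ d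
  set E := (1 - β * s) ^ d - (1 - β * t) ^ d
  set T := (1 - s) ^ d * (1 - β * t) ^ d - (1 - t) ^ d * (1 - β * s) ^ d
  have hT' : D - E ≤ T := by linear_combination hT
  have key : ((1 - k * (1 - x)) ^ (d + 1) - x ^ (d + 1)) * D ≤ a * β * E + m * β * T :=
    calc ((1 - k * (1 - x)) ^ (d + 1) - x ^ (d + 1)) * D
        ≤ (β ^ 2 * a + β * (1 - β) * m) * D := mul_le_mul_of_nonneg_right hC hD
      _ = β * ((a - m) * (β * D) + m * D) := by ring
      _ ≤ β * ((a - m) * E + m * (E + T)) := by gcongr; linarith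
      _ = a * β * E + m * β * T := by ring
  have hid : gainDeriv d x 1 t * gainDeriv d x k s - gainDeriv d x 1 s * gainDeriv d x k t
      = m * (a * β * E + m * β * T - ((1 - k * (1 - x)) ^ (d + 1) - x ^ (d + 1)) * D) := by
    simp only [gainDeriv, a, m, β, D, E, T]
    ring
  have := mul_nonneg hm (sub_nonneg.2 key)
  rw [← hid] at this
  linarith

theorem monotoneOn_gain_div {d : ℕ} (hd : d ≠ 0) {x k : ℝ} (hx₀ : 0 ≤ x) (hx₁ : x < 1)
    (hk₀ : 0 < k) (hk₁ : k < 1) :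
    MonotoneOn (fun ε => gain d x 1 ε / gain d x k ε) (Ioc 0 1) :=
  monotoneOn_div_of_deriv_cross (fun ε _ => hasDerivAt_gain d x 1 ε)
    (fun ε _ => hasDerivAt_gain d x k ε) (gain_zero d x 1) (gain_zero d x k)
    (fun _ hε => gain_pos hd hx₀ hx₁ hk₀ hk₁ hε.1 hε.2)
    (fun _ hs _ ht hst => gainDeriv_one_mul_gainDeriv_le hd hx₀ hx₁.le hk₀.le hk₁.le hs.1 hst ht.2)

noncomputable def stepCost (d : ℕ) (x ε k : ℝ) : ℝ :=
  x * ε / (1 - x * (1 - ε)) * (1 - k * (1 - x)) ^ (d + 1)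
    + (1 - x * ε / (1 - x * (1 - ε))) * ((1 - ε) * x + k * ε * x) ^ (d + 1)

theorem stepCost_zero_sub {x ε : ℝ} (h : 1 - x * (1 - ε) ≠ 0) (d : ℕ) (k : ℝ) :
    stepCost d x ε 0 - stepCost d x ε k = x / (1 - x * (1 - ε)) * gain d x k ε := by
  simp only [stepCost, gain]
  rw [show (1 - ε) * x + 0 * ε * x = x * (1 - ε) by ring,
    show (1 - ε) * x + k * ε * x = x * (1 - (1 - k) * ε) by ring, mul_pow, mul_pow]
  field_simp
  ring

/-- In the step-demand monomial model, for fixed `x, k ∈ (0,1)`, the ratio of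
the optimal welfare improvement to the welfare improvement of policy `k`,
`ε ↦ (ψ_ε(0) − ψ_ε(1)) / (ψ_ε(0) − ψ_ε(k))`, is monotonically increasing on
`(0,1)`, where `ψ_ε(k) = t₁(ε)·N₁(k)^{d+1} + (1−t₁(ε))·N₂(ε,k)^{d+1}` with
`t₁(ε) = xε/(1−x(1−ε))`, `N₁(k) = 1−k(1−x)`, `N₂(ε,k) = (1−ε)x + kεx`. -/
theorem stmt10 (d : ℕ) (hd : 0 < d)
    (x k : ℝ) (hx : x ∈ Set.Ioo (0 : ℝ) 1) (hk : k ∈ Set.Ioo (0 : ℝ) 1)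
    (t₁ : ℝ → ℝ) (ht₁ : ∀ ε, t₁ ε = x * ε / (1 - x * (1 - ε)))
    (N₁ : ℝ → ℝ) (hN₁ : ∀ k', N₁ k' = 1 - k' * (1 - x))
    (N₂ : ℝ → ℝ → ℝ) (hN₂ : ∀ ε k', N₂ ε k' = (1 - ε) * x + k' * ε * x)
    (ψ : ℝ → ℝ → ℝ)
    (hψ : ∀ ε k', ψ ε k' = t₁ ε * (N₁ k') ^ (d + 1) + (1 - t₁ ε) * (N₂ ε k') ^ (d + 1)) :
    MonotoneOn (fun ε => (ψ ε 0 - ψ ε 1) / (ψ ε 0 - ψ ε k)) (Set.Ioo 0 1) := by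
  obtain ⟨hx₀, hx₁⟩ := hx
  have hψ_eq : ∀ ε k', ψ ε k' = stepCost d x ε k' := fun ε k' => by
    rw [hψ, ht₁, hN₁, hN₂, stepCost]
  refine ((monotoneOn_gain_div hd.ne' hx₀.le hx₁ hk.1 hk.2).mono Ioo_subset_Ioc_self).congr
    fun ε hε => ?_
  have hD : 0 < 1 - x * (1 - ε) := by nlinarith [hε.1, hε.2]
  simp only [hψ_eq, stepCost_zero_sub hD.ne']
  exact (mul_div_mul_left _ _ (div_pos hx₀ hD).ne').symm
end

section
/- Let d be a positive integer and let r ∈ (0, 1/(d+1)). Then ((1 − (d+1)r)/(1 − dr))^{d+1} + 1/(1 − r)^{d+1} ≥ 2. -/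
/-!
At `r = 0` the left-hand side equals `2`, and it increases with `r`: the sign of its derivative is
that of `(d+2) log (1-dr) - d log (1-(d+1)r) - (d+2) log (1-r)`, a function that vanishes at `0` and
whose derivative `(2 (1-(d+1)r) + (d+1) d² r²) / ((1-(d+1)r) (1-r) (1-dr))` is positive.
-/

open Real Set

lemma monotoneOn_Ico_of_hasDerivAt_nonneg {a b : ℝ} {f f' : ℝ → ℝ}
    (hf : ∀ x ∈ Ico a b, HasDerivAt f (f' x) x) (hf' : ∀ x ∈ Ioo a b, 0 ≤ f' x) :
    MonotoneOn f (Ico a b) :=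
  monotoneOn_of_hasDerivWithinAt_nonneg (convex_Ico a b)
    (fun x hx ↦ (hf x hx).continuousAt.continuousWithinAt)
    (fun x hx ↦ (hf x (interior_subset hx)).hasDerivWithinAt)
    (fun x hx ↦ hf' x (by rwa [interior_Ico] at hx))

noncomputable def logGap (d : ℕ) (r : ℝ) : ℝ :=
  (d + 2) * log (1 - d * r) - d * log (1 - (d + 1) * r) - (d + 2) * log (1 - r)

noncomputable def powSum (d : ℕ) (r : ℝ) : ℝ :=
  ((1 - ((d : ℝ) + 1) * r) / (1 - d * r)) ^ (d + 1) + 1 / (1 - r) ^ (d + 1)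

section

variable (d : ℕ) {r : ℝ}

lemma one_sub_mul_pos_of_mem_Ico (hr : r ∈ Ico 0 (1 / ((d : ℝ) + 1))) :
    0 < 1 - ((d : ℝ) + 1) * r ∧ 0 < 1 - (d : ℝ) * r ∧ 0 < 1 - r := by
  obtain ⟨hr₀, hr₁⟩ := hr
  have hlt : ((d : ℝ) + 1) * r < 1 := by
    rwa [lt_div_iff₀ (by positivity), mul_comm] at hr₁
  have : 0 ≤ (d : ℝ) * r := by positivity
  exact ⟨by linarith, by linarith, by linarith⟩

lemma hasDerivAt_logGap (hr : r ∈ Ico 0 (1 / ((d : ℝ) + 1))) :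
    HasDerivAt (logGap d)
      ((2 * (1 - (d + 1) * r) + (d + 1) * d ^ 2 * r ^ 2)
        / ((1 - (d + 1) * r) * (1 - r) * (1 - d * r))) r := by
  obtain ⟨h₁, h₀, h⟩ := one_sub_mul_pos_of_mem_Ico d hr
  have hlog {c : ℝ} (hc : 0 < 1 - c * r) :
      HasDerivAt (fun s ↦ log (1 - c * s)) (-c / (1 - c * r)) r := by
    simpa using ((hasDerivAt_id r).const_mul c).const_sub 1 |>.log hc.ne'
  have hlog₁ : HasDerivAt (fun s ↦ log (1 - s)) (-1 / (1 - r)) r := by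
    simpa using hlog (c := 1) (by rwa [one_mul])
  refine (((hlog h₀).const_mul ((d : ℝ) + 2)).sub ((hlog h₁).const_mul (d : ℝ))
    |>.sub (hlog₁.const_mul ((d : ℝ) + 2))).congr_deriv ?_
  simp only [neg_div, mul_neg, sub_neg_eq_add, neg_add_eq_sub]
  field_simp
  ring

lemma monotoneOn_logGap : MonotoneOn (logGap d) (Ico 0 (1 / ((d : ℝ) + 1))) :=
  monotoneOn_Ico_of_hasDerivAt_nonneg (fun _ hs ↦ hasDerivAt_logGap d hs) fun _ hs ↦ by
    obtain ⟨h₁, h₀, h⟩ := one_sub_mul_pos_of_mem_Ico d (Ioo_subset_Ico_self hs)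
    positivity

lemma pow_mul_pow_le_pow (hr : r ∈ Ico 0 (1 / ((d : ℝ) + 1))) :
    (1 - ((d : ℝ) + 1) * r) ^ d * (1 - r) ^ (d + 2) ≤ (1 - d * r) ^ (d + 2) := by
  obtain ⟨h₁, h₀, h⟩ := one_sub_mul_pos_of_mem_Ico d hr
  have hgap := monotoneOn_logGap d ⟨le_rfl, by positivity⟩ hr hr.1
  simp only [logGap, mul_zero, sub_zero, log_one, sub_self] at hgap
  rw [← log_le_log_iff (by positivity) (by positivity), log_mul (by positivity) (by positivity),
    log_pow, log_pow, log_pow]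
  push_cast
  linarith

lemma hasDerivAt_powSum (hr : r ∈ Ico 0 (1 / ((d : ℝ) + 1))) :
    HasDerivAt (powSum d)
      ((d + 1) * (1 / (1 - r) ^ (d + 2) - (1 - (d + 1) * r) ^ d / (1 - d * r) ^ (d + 2))) r := by
  obtain ⟨-, h₀, h⟩ := one_sub_mul_pos_of_mem_Ico d hr
  have hq : HasDerivAt (fun s ↦ (1 - ((d : ℝ) + 1) * s) / (1 - d * s))
      (-1 / (1 - d * r) ^ 2) r := by
    have := (((hasDerivAt_id r).const_mul ((d : ℝ) + 1)).const_sub 1).div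
      (((hasDerivAt_id r).const_mul (d : ℝ)).const_sub 1) h₀.ne'
    simp only [id, mul_one] at this
    refine this.congr_deriv ?_
    field_simp
    ring
  have hi : HasDerivAt (fun s ↦ 1 / (1 - s) ^ (d + 1)) ((d + 1) / (1 - r) ^ (d + 2)) r := by
    have := (((hasDerivAt_id r).const_sub 1).pow (d + 1)).inv (pow_ne_zero _ h.ne')
    simp only [id, Pi.pow_apply, Nat.add_sub_cancel, Nat.cast_add, Nat.cast_one] at this
    simp only [one_div]
    refine this.congr_deriv ?_
    field_simp
    ring
  refine ((hq.pow (d + 1)).add hi).congr_deriv ?_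
  simp only [Nat.add_sub_cancel, Nat.cast_add, Nat.cast_one, div_pow]
  field_simp
  ring

lemma monotoneOn_powSum : MonotoneOn (powSum d) (Ico 0 (1 / ((d : ℝ) + 1))) :=
  monotoneOn_Ico_of_hasDerivAt_nonneg (fun _ hs ↦ hasDerivAt_powSum d hs) fun _ hs ↦ by
    have hs' := Ioo_subset_Ico_self hs
    obtain ⟨-, h₀, h⟩ := one_sub_mul_pos_of_mem_Ico d hs'
    refine mul_nonneg (by positivity) (sub_nonneg.mpr ?_)
    rw [div_le_div_iff₀ (by positivity) (by positivity), one_mul]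
    exact pow_mul_pow_le_pow d hs'

end

theorem stmt11_general (d : ℕ)
    (r : ℝ) (hr : r ∈ Set.Ioo (0 : ℝ) (1 / ((d : ℝ) + 1))) :
    ((1 - ((d : ℝ) + 1) * r) / (1 - (d : ℝ) * r)) ^ (d + 1) +
      1 / (1 - r) ^ (d + 1) ≥ 2 := by
  have h := monotoneOn_powSum d ⟨le_rfl, by positivity⟩ (Ioo_subset_Ico_self hr) hr.1.le
  norm_num [powSum] at h ⊢
  exact h

/-- The key analytic inequality behind `PoA ≤ 2` for monomial prices: for a
positive integer `d` and `r ∈ (0, 1/(d+1))`,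
`((1 − (d+1)r)/(1 − dr))^{d+1} + 1/(1 − r)^{d+1} ≥ 2`. -/
theorem stmt11 (d : ℕ) (hd : 0 < d)
    (r : ℝ) (hr : r ∈ Set.Ioo (0 : ℝ) (1 / ((d : ℝ) + 1))) :
    ((1 - ((d : ℝ) + 1) * r) / (1 - (d : ℝ) * r)) ^ (d + 1) +
      1 / (1 - r) ^ (d + 1) ≥ 2 :=
  stmt11_general d r hr
end

section
/- Let d be a positive integer, x ∈ (0,1) and k ∈ (0,1]. Then (x − x^{d+1}) · (1 − (1 − k(1−x))^{d+1}) ≤ (1 − x^{d+1}) · (x − x·(1 − k(1−x))^{d+1} − (1−x)·(kx)^{d+1}). -/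
lemma stmt12_key (x k : ℝ) (hx0 : 0 ≤ x) (hx1 : x ≤ 1) (hk0 : 0 ≤ k) (hk1 : k ≤ 1) :
    ∀ n : ℕ, k ^ n * (1 - x ^ n) ≤ 1 - (1 - k * (1 - x)) ^ n := by
  intro n
  induction n with
  | zero => simp
  | succ n ih =>
    have hkn : (0:ℝ) ≤ k ^ n := pow_nonneg hk0 n
    have hxn0 : (0:ℝ) ≤ x ^ n := pow_nonneg hx0 n
    have hxn : x ^ n ≤ 1 := pow_le_one₀ hx0 hx1
    have hknk : k ^ (n+1) ≤ k := by
      calc k ^ (n+1) ≤ k ^ 1 := pow_le_pow_of_le_one hk0 hk1 (by omega)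
      _ = k := pow_one k
    have h2 : 0 ≤ 1 - k * (1 - x) := by nlinarith
    have h1 : k * x ≤ 1 - k * (1 - x) := by nlinarith
    have hmul := mul_le_mul_of_nonneg_right ih h2
    have hmul2 : k ^ n * (1 - x ^ n) * (k * x) ≤ k ^ n * (1 - x ^ n) * (1 - k * (1 - x)) :=
      mul_le_mul_of_nonneg_left h1 (mul_nonneg hkn (by linarith))
    have hpow : (1 - k * (1 - x)) ^ (n+1) = (1 - k * (1 - x)) ^ n * (1 - k * (1 - x)) := pow_succ _ _
    have hpx : x ^ (n+1) = x ^ n * x := pow_succ _ _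
    have hpk : k ^ (n+1) = k ^ n * k := pow_succ _ _
    have h5 : k ^ (n+1) * (1 - x) ≤ k * (1 - x) :=
      mul_le_mul_of_nonneg_right hknk (by linarith)
    rw [hpow, hpx, hpk]
    rw [hpk] at h5
    nlinarith [hmul, hmul2, h5]

/-- The intermediate bound `φ_{x,1}(k) ≤ (1 − x^{d+1})/(1 − (1 − k(1−x))^{d+1})`
in the step-demand monomial model at `ε = 1`, in cross-multiplied form: for a
positive integer `d`, `x ∈ (0,1)` and `k ∈ (0,1]`,
`(x − x^{d+1})·(1 − (1 − k(1−x))^{d+1}) ≤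
 (1 − x^{d+1})·(x − x(1 − k(1−x))^{d+1} − (1−x)(kx)^{d+1})`. -/
theorem stmt12 (d : ℕ) (hd : 0 < d)
    (x : ℝ) (hx : x ∈ Set.Ioo (0 : ℝ) 1)
    (k : ℝ) (hk : k ∈ Set.Ioc (0 : ℝ) 1) :
    (x - x ^ (d + 1)) * (1 - (1 - k * (1 - x)) ^ (d + 1)) ≤
      (1 - x ^ (d + 1)) *
        (x - x * (1 - k * (1 - x)) ^ (d + 1) - (1 - x) * (k * x) ^ (d + 1)) := by
  obtain ⟨hx0, hx1⟩ := hx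
  obtain ⟨hk0, hk1⟩ := hk
  have key := stmt12_key x k hx0.le hx1.le hk0.le hk1 (d + 1)
  have hmp : (k * x) ^ (d+1) = k ^ (d+1) * x ^ (d+1) := mul_pow k x (d+1)
  set X := x ^ (d+1) with hX
  set A := (1 - k * (1 - x)) ^ (d+1) with hA
  set K := k ^ (d+1) with hK
  have hX0 : 0 ≤ X := pow_nonneg hx0.le _
  -- RHS - LHS = (1-x) * (X*(1-A) - (1-X)*K*X)
  have hfac : (1 - X) * (x - x * A - (1 - x) * (K * X)) -
      (x - X) * (1 - A) = (1 - x) * (X * (1 - A) - K * (1 - X) * X) := by ring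
  have h3 : K * (1 - X) * X ≤ (1 - A) * X := mul_le_mul_of_nonneg_right key hX0
  have h4 : 0 ≤ (1 - x) * (X * (1 - A) - K * (1 - X) * X) :=
    mul_nonneg (by linarith) (by nlinarith [h3])
  rw [hmp]
  linarith [hfac, h4]
end

section
/- Fix x, ε ∈ (0,1). Set t₁ = xε/(1 − x(1−ε)), N₁(k) = 1 − k(1−x), N₂(k) = (1−ε)x + kεx and Z(k) = t₁·k·(1−x)·(N₁(k)² − N₂(k)²). Then Z has a unique maximizer k* on [0,1], given by k* = (2(1 − εx) − √((ε² + 3)x² − 2εx + 1)) / (3(1 − x − εx)) when εx ≠ 1 − x, and k* = 1/2 when εx = 1 − x. Moreover, k*, viewed as a function of (x, ε), is monotonically increasing in x and in ε, and k* ∈ (1/3, √3/3). -/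
/-!
With `v = 1 - εx` one has `N₁² - N₂² = (1 - x + εx)(1 - k)(v + x - (v - x)k)`, so `Z` is a
positive multiple of the cubic `g(k) = k(1 - k)(1 + r - (1 - r)k)` with `r = x / v > 0`.
The critical points of `g` solve `3(1 - r)k² - 4k + (1 + r) = 0`, and the relevant root is
`k*(r) = (1 + r)/(2 + √(1 + 3r²))`. Since `k*` is critical,
`g(k*) - g(k) = (k* - k)²(2 - (1 - r)(k + 2k*))`, and the second factor is affine in `k` and
positive at `k = 0, 1`, which gives the strict maximum on `[0,1]`. Finally `k*` increases with
`r`, from `k*(0) = 1/3` towards `1/√3`, and `r` increases with `x` and with `ε`.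
-/

namespace StepDemand

open Real Set

noncomputable def revenue (r k : ℝ) : ℝ := k * (1 - k) * (1 + r - (1 - r) * k)

/-- The root `(2 - √(1 + 3r²))/(3(1 - r))` of the critical-point equation, rationalized so that
it stays valid at `r = 1`. -/
noncomputable def optimalK (r : ℝ) : ℝ := (1 + r) / (2 + √(1 + 3 * r ^ 2))

section

variable {r : ℝ}

lemma sq_sqrt_one_add_three_mul_sq (r : ℝ) : √(1 + 3 * r ^ 2) ^ 2 = 1 + 3 * r ^ 2 :=
  sq_sqrt (by positivity)

lemma optimalK_critical (r : ℝ) :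
    3 * (1 - r) * optimalK r ^ 2 - 4 * optimalK r + (1 + r) = 0 := by
  have hS := sq_sqrt_one_add_three_mul_sq r
  have hden : 2 + √(1 + 3 * r ^ 2) ≠ 0 := by positivity
  rw [optimalK]
  field_simp
  linear_combination (1 + r) * hS

lemma revenue_optimalK_sub (r k : ℝ) :
    revenue r (optimalK r) - revenue r k =
      (optimalK r - k) ^ 2 * (2 - (1 - r) * (k + 2 * optimalK r)) := by
  unfold revenue
  linear_combination (optimalK r - k) * optimalK_critical r

lemma optimalK_pos (hr : 0 ≤ r) : 0 < optimalK r := by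
  unfold optimalK; positivity

lemma one_third_lt_optimalK (hr : 0 < r) : 1 / 3 < optimalK r := by
  have hS := sq_sqrt_one_add_three_mul_sq r
  have : √(1 + 3 * r ^ 2) < 1 + 3 * r := by nlinarith [sqrt_nonneg (1 + 3 * r ^ 2)]
  rw [optimalK, lt_div_iff₀ (by positivity)]
  linarith

lemma optimalK_lt_sqrt_three_div_three (hr : 0 ≤ r) : optimalK r < √3 / 3 := by
  have h3 := sq_sqrt (show (0 : ℝ) ≤ 3 by norm_num)
  have : √3 * (1 + r) - 2 < √(1 + 3 * r ^ 2) := by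
    apply lt_sqrt_of_sq_lt
    nlinarith [show (3 : ℝ) / 2 < √3 by nlinarith [sqrt_nonneg 3]]
  have h3pos : 0 < √3 := by positivity
  rw [optimalK, div_lt_div_iff₀ (by positivity) (by norm_num)]
  nlinarith [mul_lt_mul_of_pos_left this h3pos]

lemma optimalK_lt_one (hr : 0 ≤ r) : optimalK r < 1 := by
  have : √3 < 3 := by nlinarith [sq_sqrt (show (0 : ℝ) ≤ 3 by norm_num), sqrt_nonneg 3]
  linarith [optimalK_lt_sqrt_three_div_three hr]

lemma optimalK_cofactor_pos (hr : 0 ≤ r) {k : ℝ} (hk : k ∈ Icc 0 1) :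
    0 < 2 - (1 - r) * (k + 2 * optimalK r) := by
  obtain ⟨hk0, hk1⟩ := hk
  have hS := sqrt_nonneg (1 + 3 * r ^ 2)
  have hden : 0 < 2 + √(1 + 3 * r ^ 2) := by positivity
  have at_zero : 0 < 2 - 2 * (1 - r) * optimalK r := by
    rw [optimalK, mul_div_assoc', sub_pos, div_lt_iff₀ hden]
    nlinarith
  have at_one : 0 < 1 + r - 2 * (1 - r) * optimalK r := by
    rw [optimalK, mul_div_assoc', sub_pos, div_lt_iff₀ hden]
    nlinarith [mul_pos (show 0 < 1 + r by linarith)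
      (show 0 < √(1 + 3 * r ^ 2) + 2 * r by positivity)]
  rcases hk1.lt_or_eq with hk1 | rfl
  · nlinarith [mul_pos (sub_pos.2 hk1) at_zero, mul_nonneg hk0 at_one.le]
  · linarith

lemma revenue_le_optimalK (hr : 0 ≤ r) {k : ℝ} (hk : k ∈ Icc 0 1) :
    revenue r k ≤ revenue r (optimalK r) := by
  have := revenue_optimalK_sub r k
  nlinarith [mul_nonneg (sq_nonneg (optimalK r - k)) (optimalK_cofactor_pos hr hk).le]

lemma revenue_lt_optimalK (hr : 0 ≤ r) {k : ℝ} (hk : k ∈ Icc 0 1) (hne : k ≠ optimalK r) :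
    revenue r k < revenue r (optimalK r) := by
  have := revenue_optimalK_sub r k
  have : 0 < (optimalK r - k) ^ 2 := by
    positivity [sub_ne_zero.mpr (Ne.symm hne)]
  nlinarith [mul_pos this (optimalK_cofactor_pos hr hk)]

lemma optimalK_monotoneOn : MonotoneOn optimalK (Ici 0) := by
  intro r (hr : 0 ≤ r) s (hs : 0 ≤ s) hrs
  rw [optimalK, optimalK]
  set P := √(1 + 3 * r ^ 2) with hP
  set Q := √(1 + 3 * s ^ 2) with hQ
  have hP2 : P ^ 2 = 1 + 3 * r ^ 2 := sq_sqrt_one_add_three_mul_sq r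
  have hQ2 : Q ^ 2 = 1 + 3 * s ^ 2 := sq_sqrt_one_add_three_mul_sq s
  have hP0 : 0 ≤ P := sqrt_nonneg _
  have hQ0 : 0 ≤ Q := sqrt_nonneg _
  have hPQ : 1 + 3 * r * s ≤ P * Q := by
    rw [hP, hQ, ← sqrt_mul (by positivity)]
    apply le_sqrt_of_sq_le
    nlinarith [sq_nonneg (r - s)]
  have key : ((1 + s) * (2 + P) - (1 + r) * (2 + Q)) * (P + Q) =
      (s - r) * (2 * (P + Q) + P * Q + 1 - 3 * r - 3 * s - 3 * r * s) := by
    linear_combination (1 + s) * hP2 - (1 + r) * hQ2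
  have hfactor : 0 ≤ 2 * (P + Q) + P * Q + 1 - 3 * r - 3 * s - 3 * r * s := by
    nlinarith
  have hPQpos : 0 < P + Q := add_pos_of_nonneg_of_pos hP0 (sqrt_pos.2 (by positivity))
  rw [div_le_div_iff₀ (by positivity) (by positivity), ← sub_nonneg]
  refine nonneg_of_mul_nonneg_left ?_ hPQpos
  rw [key]
  exact mul_nonneg (sub_nonneg.2 hrs) hfactor

lemma optimalK_one : optimalK 1 = 1 / 2 := by
  rw [optimalK, show (1 : ℝ) + 3 * 1 ^ 2 = 2 ^ 2 by norm_num, sqrt_sq zero_le_two]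
  norm_num

lemma optimalK_eq_of_ne_one (hr : r ≠ 1) :
    optimalK r = (2 - √(1 + 3 * r ^ 2)) / (3 * (1 - r)) := by
  have h3 : 3 * (1 - r) ≠ 0 := mul_ne_zero three_ne_zero (sub_ne_zero.2 hr.symm)
  rw [optimalK, div_eq_div_iff (by positivity) h3]
  linear_combination sq_sqrt_one_add_three_mul_sq r

lemma optimalK_div {x v : ℝ} (hv : 0 < v) (hxv : x ≠ v) :
    optimalK (x / v) = (2 * v - √(v ^ 2 + 3 * x ^ 2)) / (3 * (v - x)) := by
  obtain ⟨r, rfl⟩ : ∃ r, x = r * v := ⟨x / v, (div_mul_cancel₀ x hv.ne').symm⟩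
  have hr : r ≠ 1 := by rintro rfl; exact hxv (one_mul v)
  rw [mul_div_cancel_right₀ _ hv.ne', optimalK_eq_of_ne_one hr,
    show v ^ 2 + 3 * (r * v) ^ 2 = v ^ 2 * (1 + 3 * r ^ 2) by ring,
    sqrt_mul (sq_nonneg v), sqrt_sq hv.le,
    show 2 * v - v * √(1 + 3 * r ^ 2) = v * (2 - √(1 + 3 * r ^ 2)) by ring,
    show 3 * (v - r * v) = v * (3 * (1 - r)) by ring, mul_div_mul_left _ _ hv.ne']

end

noncomputable def peakRatio (x ε : ℝ) : ℝ := x / (1 - ε * x)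

section

variable {x ε : ℝ}

lemma one_sub_mul_pos (hx : x ∈ Ioo 0 1) (hε : ε ∈ Ioo 0 1) : 0 < 1 - ε * x :=
  sub_pos.2 (mul_lt_one_of_nonneg_of_lt_one_left hε.1.le hε.2 hx.2.le)

lemma peakRatio_pos (hx : x ∈ Ioo 0 1) (hε : ε ∈ Ioo 0 1) : 0 < peakRatio x ε :=
  div_pos hx.1 (one_sub_mul_pos hx hε)

lemma peakRatio_le_peakRatio {x' ε' : ℝ} (hx : x ∈ Ioo 0 1) (hε : ε ∈ Ioo 0 1)
    (hx' : x' ∈ Ioo 0 1) (hε' : ε' ∈ Ioo 0 1) (hxx' : x ≤ x') (hεε' : ε ≤ ε') :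
    peakRatio x ε ≤ peakRatio x' ε' := by
  rw [peakRatio, peakRatio, div_le_div_iff₀ (one_sub_mul_pos hx hε) (one_sub_mul_pos hx' hε')]
  nlinarith [mul_nonneg (mul_nonneg hx.1.le hx'.1.le) (sub_nonneg.2 hεε')]

lemma optimalK_peakRatio (hx : x ∈ Ioo 0 1) (hε : ε ∈ Ioo 0 1) :
    optimalK (peakRatio x ε) =
      if ε * x = 1 - x then 1 / 2
      else (2 * (1 - ε * x) - √((ε ^ 2 + 3) * x ^ 2 - 2 * ε * x + 1)) /
        (3 * (1 - x - ε * x)) := by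
  have hv := one_sub_mul_pos hx hε
  split_ifs with h
  · rw [peakRatio, div_eq_one_iff_eq hv.ne' |>.2 (by linarith), optimalK_one]
  · rw [peakRatio, optimalK_div hv (fun h' => h (by linarith)),
      show (ε ^ 2 + 3) * x ^ 2 - 2 * ε * x + 1 = (1 - ε * x) ^ 2 + 3 * x ^ 2 by ring,
      show 1 - x - ε * x = 1 - ε * x - x by ring]

lemma revenue_peakRatio (hx : x ∈ Ioo 0 1) (hε : ε ∈ Ioo 0 1) (k : ℝ) :
    (1 - ε * x) * revenue (peakRatio x ε) k =
      k * (1 - k) * (1 + x - ε * x - k * (1 - x - ε * x)) := by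
  have hv := one_sub_mul_pos hx hε
  rw [revenue, peakRatio]
  field_simp
  ring

end

end StepDemand

open StepDemand in
/-- In the step-demand quadratic model (`P(z) = z²`), the revenue
`Z(k) = t₁·k·(1−x)·(N₁(k)² − N₂(k)²)` has a unique maximizer `k*` on `[0,1]`,
given by `k* = (2(1−εx) − √((ε²+3)x² − 2εx + 1))/(3(1−x−εx))` when
`εx ≠ 1 − x` and `k* = 1/2` otherwise; moreover `k*`, as a function of
`(x, ε)`, is monotonically increasing in `x` and in `ε`, and
`k* ∈ (1/3, √3/3)`. -/
theorem stmt13 (kstar : ℝ → ℝ → ℝ)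
    (hkstar : ∀ x ε : ℝ, kstar x ε =
      if ε * x = 1 - x then 1 / 2
      else (2 * (1 - ε * x) - Real.sqrt ((ε ^ 2 + 3) * x ^ 2 - 2 * ε * x + 1)) /
        (3 * (1 - x - ε * x)))
    (x ε : ℝ) (hx : x ∈ Set.Ioo (0 : ℝ) 1) (hε : ε ∈ Set.Ioo (0 : ℝ) 1)
    (t₁ : ℝ) (ht₁ : t₁ = x * ε / (1 - x * (1 - ε)))
    (N₁ N₂ Z : ℝ → ℝ)
    (hN₁ : ∀ k, N₁ k = 1 - k * (1 - x))
    (hN₂ : ∀ k, N₂ k = (1 - ε) * x + k * ε * x)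
    (hZ : ∀ k, Z k = t₁ * k * (1 - x) * ((N₁ k) ^ 2 - (N₂ k) ^ 2)) :
    kstar x ε ∈ Set.Icc (0 : ℝ) 1 ∧
    (∀ k ∈ Set.Icc (0 : ℝ) 1, Z k ≤ Z (kstar x ε)) ∧
    (∀ k ∈ Set.Icc (0 : ℝ) 1, Z k = Z (kstar x ε) → k = kstar x ε) ∧
    (∀ x' ∈ Set.Ioo (0 : ℝ) 1, x ≤ x' → kstar x ε ≤ kstar x' ε) ∧
    (∀ ε' ∈ Set.Ioo (0 : ℝ) 1, ε ≤ ε' → kstar x ε ≤ kstar x ε') ∧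
    kstar x ε ∈ Set.Ioo (1 / 3 : ℝ) (Real.sqrt 3 / 3) := by
  have hkstar_eq {x' ε' : ℝ} (hx' : x' ∈ Set.Ioo (0 : ℝ) 1)
      (hε' : ε' ∈ Set.Ioo (0 : ℝ) 1) : kstar x' ε' = optimalK (peakRatio x' ε') := by
    rw [hkstar, optimalK_peakRatio hx' hε']
  have hr := peakRatio_pos hx hε
  have hC : 0 < t₁ * (1 - x) * (1 - x + ε * x) * (1 - ε * x) := by
    have ht₁_pos : 0 < t₁ :=
      ht₁ ▸ div_pos (mul_pos hx.1 hε.1) (by nlinarith [hx.1, hx.2, hε.1, hε.2])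
    exact mul_pos (mul_pos (mul_pos ht₁_pos (sub_pos.2 hx.2)) (by nlinarith [hx.1, hx.2, hε.1]))
      (one_sub_mul_pos hx hε)
  have hZ_eq (k : ℝ) :
      Z k = t₁ * (1 - x) * (1 - x + ε * x) * (1 - ε * x) * revenue (peakRatio x ε) k := by
    rw [hZ, hN₁, hN₂]
    linear_combination (-(t₁ * (1 - x) * (1 - x + ε * x))) * revenue_peakRatio hx hε k
  rw [hkstar_eq hx hε]
  refine ⟨⟨(optimalK_pos hr.le).le, (optimalK_lt_one hr.le).le⟩, fun k hk => ?_,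
    fun k hk hZk => ?_, fun x' hx' hxx' => ?_, fun ε' hε' hεε' => ?_,
    one_third_lt_optimalK hr, optimalK_lt_sqrt_three_div_three hr.le⟩
  · rw [hZ_eq, hZ_eq]
    exact mul_le_mul_of_nonneg_left (revenue_le_optimalK hr.le hk) hC.le
  · by_contra hne
    rw [hZ_eq, hZ_eq] at hZk
    exact (mul_lt_mul_of_pos_left (revenue_lt_optimalK hr.le hk hne) hC).ne hZk
  · rw [hkstar_eq hx' hε]
    exact optimalK_monotoneOn hr.le (peakRatio_pos hx' hε).le
      (peakRatio_le_peakRatio hx hε hx' hε hxx' le_rfl)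
  · rw [hkstar_eq hx hε']
    exact optimalK_monotoneOn hr.le (peakRatio_pos hx hε').le
      (peakRatio_le_peakRatio hx hε hx hε' le_rfl hεε')
end

section
/- The function k ↦ (8k − 9k² − 1) / (k²·(5k² − 16k + 9)) is strictly decreasing on the interval (1/3, √3/3). -/
/-!
By the quotient rule the derivative has numerator `6k(3k − 1)(k − 1)²(5k − 3)`, which is negative
on `(1/3, 3/5)`, while the denominator stays positive there since
`5k² − 16k + 9 = 5(1 − k)² + 2(2 − 3k)`. So the function decreases on `(1/3, 3/5)`, which contains
`(1/3, √3/3)` because `√3 < 9/5`.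
-/

open Set

namespace PriceOfAnarchy

def num (k : ℝ) : ℝ := 8 * k - 9 * k ^ 2 - 1

def den (k : ℝ) : ℝ := k ^ 2 * (5 * k ^ 2 - 16 * k + 9)

theorem den_pos {k : ℝ} (h₀ : 0 < k) (h₁ : k < 2 / 3) : 0 < den k := by
  have : 0 < 5 * k ^ 2 - 16 * k + 9 := by nlinarith [sq_nonneg (1 - k)]
  unfold den
  positivity

theorem hasDerivAt_num_div_den {k : ℝ} (hk : den k ≠ 0) :
    HasDerivAt (fun x => num x / den x)
      (6 * k * (3 * k - 1) * (k - 1) ^ 2 * (5 * k - 3) / den k ^ 2) k := by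
  have hnum : HasDerivAt num (8 - 18 * k) k :=
    (((hasDerivAt_id k).const_mul 8).sub ((hasDerivAt_pow 2 k).const_mul 9)).sub_const 1
      |>.congr_deriv (by push_cast; ring)
  have hden : HasDerivAt den (2 * k * (5 * k ^ 2 - 16 * k + 9) + k ^ 2 * (10 * k - 16)) k :=
    (hasDerivAt_pow 2 k).mul
      ((((hasDerivAt_pow 2 k).const_mul 5).sub ((hasDerivAt_id k).const_mul 16)).add_const 9)
      |>.congr_deriv (by simp only [Pi.sub_apply, id_eq]; push_cast; ring)
  refine (hnum.div hden hk).congr_deriv ?_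
  unfold num den
  ring

theorem strictAntiOn_num_div_den : StrictAntiOn (fun k => num k / den k) (Ioo (1 / 3) (3 / 5)) := by
  refine strictAntiOn_of_deriv_neg (convex_Ioo _ _) ?_ ?_
  · refine ContinuousOn.div (by unfold num; fun_prop) (by unfold den; fun_prop) ?_
    rintro k ⟨hk₁, hk₂⟩
    exact (den_pos (by linarith) (by linarith)).ne'
  · rintro k hk
    rw [interior_Ioo] at hk
    obtain ⟨hk₁, hk₂⟩ := hk
    have hden := den_pos (k := k) (by linarith) (by linarith)
    rw [(hasDerivAt_num_div_den hden.ne').deriv]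
    have hk₃ : 0 < 3 * k - 1 := by linarith
    have hk₄ : 0 < (k - 1) ^ 2 := by nlinarith
    refine div_neg_of_neg_of_pos (mul_neg_of_pos_of_neg ?_ (by linarith)) (by positivity)
    positivity

end PriceOfAnarchy

/-- The Price of Anarchy expression for quadratic prices,
`k ↦ (8k − 9k² − 1)/(k²·(5k² − 16k + 9))`, is strictly decreasing on the
interval `(1/3, √3/3)`. -/
theorem stmt15 :
    StrictAntiOn
      (fun k : ℝ => (8 * k - 9 * k ^ 2 - 1) / (k ^ 2 * (5 * k ^ 2 - 16 * k + 9)))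
      (Set.Ioo (1 / 3 : ℝ) (Real.sqrt 3 / 3)) := by
  have hsqrt : Real.sqrt 3 < 9 / 5 := by
    rw [Real.sqrt_lt' (by norm_num)]
    norm_num
  exact PriceOfAnarchy.strictAntiOn_num_div_den.mono (Ioo_subset_Ioo_right (by linarith))
end

section
/- Fix x, ε ∈ (0,1). Set t₁ = xε/(1 − x(1−ε)), N₁(k) = 1 − k(1−x), N₂(k) = (1−ε)x + kεx, ψ(k) = t₁·N₁(k)³ + (1−t₁)·N₂(k)³ and Z(k) = t₁·k·(1−x)·(N₁(k)² − N₂(k)²). Then for the unique maximizer k* of Z on [0,1], one has ψ(0) − ψ(1) ≤ (27/19)·(ψ(0) − ψ(k*)). -/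
/-!
After the substitution `a = 1 - x - εx`, `b = 1 + (1 - ε)x`, `C = xε(1 - x)`, both objectives
become polynomials in `k`: `Z = C·k(1 - k)(b - ak)` and `ψ(0) - ψ(k) = 3C·g(k)` with
`g(k) = ∫₀ᵏ (1 - s)(b - as) ds`. The revenue maximizer `t` is interior, so it satisfies the
first-order condition `b(1 - 2t) = a·t(2 - 3t)`, which forces `t < 2/3`. Eliminating `a` with it,
`6t(2 - 3t)(27 g(t) - 19 g(1)) = b(3t - 1)²(15t² - 38t + 19)`, and the quadratic factor is
positive on `[0, 2/3]`; equality `t = 1/3` is the limit `a = b`.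
-/

namespace QuadraticStepDemand

def revenue (a b k : ℝ) : ℝ := k * (1 - k) * (b - a * k)

noncomputable def welfareGain (a b k : ℝ) : ℝ := b * k - (a + b) * k ^ 2 / 2 + a * k ^ 3 / 3

variable {a b t : ℝ}

theorem hasDerivAt_revenue (a b k : ℝ) :
    HasDerivAt (revenue a b) ((1 - 2 * k) * (b - a * k) - a * k * (1 - k)) k := by
  have h := ((hasDerivAt_id' k).mul ((hasDerivAt_id' k).const_sub 1)).mul
    (((hasDerivAt_id' k).const_mul a).const_sub b)
  exact h.congr_deriv (by simp only [Pi.mul_apply]; ring)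

theorem mem_Ioo_of_isMaxOn_revenue (hb : 0 < b) (hab : a ≤ b) (ht : t ∈ Set.Icc (0 : ℝ) 1)
    (hmax : IsMaxOn (revenue a b) (Set.Icc 0 1) t) : t ∈ Set.Ioo (0 : ℝ) 1 := by
  have hpos : 0 < revenue a b t := by
    have h := hmax (show (1 / 3 : ℝ) ∈ Set.Icc 0 1 by norm_num)
    have : 0 < revenue a b (1 / 3) := by unfold revenue; nlinarith
    exact this.trans_le h
  obtain ⟨h0, h1⟩ := ht
  refine ⟨h0.lt_of_ne ?_, h1.lt_of_ne ?_⟩ <;> rintro rfl <;> simp [revenue] at hpos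

theorem revenue_firstOrder_of_isMaxOn (ht : t ∈ Set.Ioo (0 : ℝ) 1)
    (hmax : IsMaxOn (revenue a b) (Set.Icc 0 1) t) : b * (1 - 2 * t) = a * t * (2 - 3 * t) := by
  have hloc : IsLocalMax (revenue a b) t := hmax.isLocalMax (Icc_mem_nhds ht.1 ht.2)
  linear_combination hloc.hasDerivAt_eq_zero (hasDerivAt_revenue a b t)

theorem lt_two_thirds_of_firstOrder (hb : 0 < b) (hab : a ≤ b) (ht : t ∈ Set.Ioo (0 : ℝ) 1)
    (hfoc : b * (1 - 2 * t) = a * t * (2 - 3 * t)) : t < 2 / 3 := by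
  obtain ⟨h0, h1⟩ := ht
  by_contra! h
  -- for `t > 1/2` the condition `(1 - 2t)(b - at) = a t (1 - t)` needs `a < 0`, hence `t < 2/3`
  have hbat : 0 < b - a * t := by nlinarith
  have ha : a < 0 := by nlinarith
  nlinarith

theorem welfareGain_one_le_of_firstOrder (hb : 0 < b) (ht : t ∈ Set.Ioo (0 : ℝ) (2 / 3))
    (hfoc : b * (1 - 2 * t) = a * t * (2 - 3 * t)) :
    19 * welfareGain a b 1 ≤ 27 * welfareGain a b t := by
  obtain ⟨h0, h23⟩ := ht
  have hid : 6 * t * (2 - 3 * t) * (27 * welfareGain a b t - 19 * welfareGain a b 1)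
      = b * (3 * t - 1) ^ 2 * (15 * t ^ 2 - 38 * t + 19) := by
    unfold welfareGain
    linear_combination (-(54 * t ^ 3 - 81 * t ^ 2 + 19)) * hfoc
  have hquad : 0 < 15 * t ^ 2 - 38 * t + 19 := by nlinarith
  have hrhs : 0 ≤ b * (3 * t - 1) ^ 2 * (15 * t ^ 2 - 38 * t + 19) := by positivity
  have hfac : 0 < 6 * t * (2 - 3 * t) := by nlinarith
  nlinarith

theorem welfareGain_one_le_of_isMaxOn_revenue (hb : 0 < b) (hab : a ≤ b)
    (ht : t ∈ Set.Icc (0 : ℝ) 1) (hmax : IsMaxOn (revenue a b) (Set.Icc 0 1) t) :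
    19 * welfareGain a b 1 ≤ 27 * welfareGain a b t := by
  have hint := mem_Ioo_of_isMaxOn_revenue hb hab ht hmax
  have hfoc := revenue_firstOrder_of_isMaxOn hint hmax
  exact welfareGain_one_le_of_firstOrder hb ⟨hint.1, lt_two_thirds_of_firstOrder hb hab hint hfoc⟩
    hfoc

end QuadraticStepDemand

open QuadraticStepDemand in
/-- Price of Anarchy at most `27/19` for quadratic prices in the step-demand
model: with `ψ(k) = t₁·N₁(k)³ + (1−t₁)·N₂(k)³` and
`Z(k) = t₁·k·(1−x)·(N₁(k)² − N₂(k)²)`, the unique maximizer `k*` of `Z` on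
`[0,1]` satisfies `ψ(0) − ψ(1) ≤ (27/19)·(ψ(0) − ψ(k*))`. -/
theorem stmt16 (x ε : ℝ) (hx : x ∈ Set.Ioo (0 : ℝ) 1) (hε : ε ∈ Set.Ioo (0 : ℝ) 1)
    (t₁ : ℝ) (ht₁ : t₁ = x * ε / (1 - x * (1 - ε)))
    (N₁ N₂ ψ Z : ℝ → ℝ)
    (hN₁ : ∀ k, N₁ k = 1 - k * (1 - x))
    (hN₂ : ∀ k, N₂ k = (1 - ε) * x + k * ε * x)
    (hψ : ∀ k, ψ k = t₁ * (N₁ k) ^ 3 + (1 - t₁) * (N₂ k) ^ 3)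
    (hZ : ∀ k, Z k = t₁ * k * (1 - x) * ((N₁ k) ^ 2 - (N₂ k) ^ 2))
    (kstar : ℝ) (hks : kstar ∈ Set.Icc (0 : ℝ) 1)
    (hmax : ∀ k ∈ Set.Icc (0 : ℝ) 1, Z k ≤ Z kstar) :
    ψ 0 - ψ 1 ≤ (27 / 19) * (ψ 0 - ψ kstar) := by
  obtain ⟨hx0, hx1⟩ := hx
  obtain ⟨hε0, hε1⟩ := hε
  set a := 1 - x - ε * x
  set b := 1 + (1 - ε) * x
  set C := x * ε * (1 - x)
  have hC : 0 < C := mul_pos (mul_pos hx0 hε0) (by linarith)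
  have hden : 1 - x * (1 - ε) ≠ 0 := by nlinarith
  have hψ_eq (k : ℝ) : ψ 0 - ψ k = 3 * C * welfareGain a b k := by
    simp only [hψ, hN₁, hN₂, ht₁, welfareGain]; field_simp; ring
  have hZ_eq (k : ℝ) : Z k = C * revenue a b k := by
    simp only [hZ, hN₁, hN₂, ht₁, revenue]; field_simp; ring
  have hrev : IsMaxOn (revenue a b) (Set.Icc 0 1) kstar := fun k hk =>
    le_of_mul_le_mul_left (by simpa only [hZ_eq] using hmax k hk) hC
  have hkey := welfareGain_one_le_of_isMaxOn_revenue (by positivity) (by nlinarith) hks hrev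
  rw [hψ_eq, hψ_eq]
  nlinarith
end

section
/- For every c < 27/19 there exist x, ε ∈ (0,1) such that, setting t₁ = xε/(1 − x(1−ε)), N₁(k) = 1 − k(1−x), N₂(k) = (1−ε)x + kεx, ψ(k) = t₁·N₁(k)³ + (1−t₁)·N₂(k)³ and Z(k) = t₁·k·(1−x)·(N₁(k)² − N₂(k)²), the unique maximizer k* of Z on [0,1] satisfies ψ(0) − ψ(1) > c·(ψ(0) − ψ(k*)). -/
lemma stmt17_Aub (t x k d : ℝ) (ht0 : 0 ≤ t) (ht1 : t ≤ 1) (hx0 : 0 < x) (hx1 : x ≤ 1)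
    (hk0 : 0 ≤ k) (hk1 : k ≤ 1) (hkd : k ≤ 1/3 + d) (hd : 0 ≤ d) :
    t*(1-(1-k*(1-x))^3) + (1-t)*((x/2)^3 - (x*(1+k)/2)^3) ≤ t*(19/27+3*d) := by
  have hcube : (x/2)^3 ≤ (x*(1+k)/2)^3 := by
    apply pow_le_pow_left₀ (by positivity); nlinarith
  have e1 : (1-t)*((x/2)^3 - (x*(1+k)/2)^3) ≤ 0 :=
    mul_nonpos_of_nonneg_of_nonpos (by linarith) (by linarith)
  have e2 : (1-k)^3 ≤ (1 - k*(1-x))^3 := by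
    apply pow_le_pow_left₀ (by linarith); nlinarith
  have e3 : 1-(1-k)^3 ≤ 19/27 + 3*d := by nlinarith [sq_nonneg (k - 1/3)]
  have e23 : t*(1 - (1 - k*(1-x))^3) ≤ t*(19/27 + 3*d) :=
    mul_le_mul_of_nonneg_left (by linarith) ht0
  linarith

lemma stmt17_Alb (t x k : ℝ) (ht2 : x/2 ≤ t) (ht1 : t ≤ 1) (hx0 : 0 < x)
    (hx1 : x ≤ 1/10000) (hk0 : 1/4 ≤ k) (hk1 : k ≤ 1) :
    0 ≤ t*(1-(1-k*(1-x))^3) + (1-t)*((x/2)^3 - (x*(1+k)/2)^3) := by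
  have ht0 : 0 < t := by linarith
  have h2 : 1 - k*(1-x) ≤ 3/4 + x := by nlinarith
  have h3 : (1 - k*(1-x))^3 ≤ (3/4 + x)^3 := by
    apply pow_le_pow_left₀ (by nlinarith) h2
  have h3b : (3/4+x)^3 ≤ 1/2 := by nlinarith [sq_nonneg x]
  have ht5 : t*(1/2) ≤ t*(1 - (1 - k*(1-x))^3) :=
    mul_le_mul_of_nonneg_left (by linarith) ht0.le
  have hk0' : (0:ℝ) ≤ k := by linarith
  have key : (x*(1+k)/2)^3 - (x/2)^3 ≤ x^3 := by
    nlinarith [mul_nonneg (mul_nonneg hx0.le hx0.le) hx0.le,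
      mul_nonneg (mul_nonneg (mul_nonneg hx0.le hx0.le) hx0.le) hk0',
      mul_nonneg (mul_nonneg (mul_nonneg (mul_nonneg hx0.le hx0.le) hx0.le) hk0') hk0',
      mul_nonneg (mul_nonneg (mul_nonneg (mul_nonneg (mul_nonneg hx0.le hx0.le) hx0.le) hk0') hk0') hk0']
  have h5a : (1-t)*(-(x^3)) ≤ (1-t)*((x/2)^3 - (x*(1+k)/2)^3) :=
    mul_le_mul_of_nonneg_left (by linarith) (by linarith)
  have h5 : -(x^3) ≤ (1-t)*((x/2)^3 - (x*(1+k)/2)^3) := by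
    nlinarith [mul_nonneg (mul_nonneg (mul_nonneg hx0.le hx0.le) hx0.le) ht0.le]
  have hx3t : x^3 ≤ t/4 := by nlinarith
  linarith

lemma stmt17_Blb (t x : ℝ) (ht2 : x/2 ≤ t) (ht1 : t ≤ 1) (hx0 : 0 < x) (hx1 : x ≤ 1) :
    t*(1-4*x^2) ≤ t*(1-x^3) + (1-t)*((x/2)^3 - x^3) := by
  nlinarith [mul_nonneg (mul_nonneg hx0.le hx0.le) hx0.le, sq_nonneg x,
    mul_nonneg (mul_nonneg (mul_nonneg hx0.le hx0.le) hx0.le) (by linarith : (0:ℝ) ≤ t),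
    mul_nonneg (sq_nonneg x) (by linarith : (0:ℝ) ≤ t)]

set_option maxHeartbeats 800000 in
lemma stmt17_final (t x γ m c k : ℝ)
    (hm1 : (1/2:ℝ) ≤ m) (hm2 : m < 27/19) (hcm : c ≤ m)
    (hγ : γ = 1 - m * 19 / 27) (hx : x = γ^2/10000)
    (ht1 : x/2 ≤ t) (ht2 : t ≤ x)
    (hk0 : 0 ≤ k) (hk1 : k ≤ 1) (hsq : (k-1/3)^2 ≤ 18*x) :
    (t * (1 - 0*(1-x))^3 + (1-t)*((1-1/2)*x + 0*(1/2)*x)^3)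
      - (t * (1 - 1*(1-x))^3 + (1-t)*((1-1/2)*x + 1*(1/2)*x)^3)
    > c * ((t * (1 - 0*(1-x))^3 + (1-t)*((1-1/2)*x + 0*(1/2)*x)^3)
      - (t * (1 - k*(1-x))^3 + (1-t)*((1-1/2)*x + k*(1/2)*x)^3)) := by
  have hγ0 : 0 < γ := by nlinarith
  have hγ1 : γ ≤ 35/54 := by nlinarith
  have hx0 : 0 < x := by rw [hx]; positivity
  have hxs : x ≤ 1/10000 := by nlinarith [sq_nonneg γ]
  have ht0 : 0 < t := by linarith
  have hsq' : (k - 1/3)^2 ≤ (γ/20)^2 := by nlinarith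
  have hkl : 1/3 - γ/20 ≤ k := by nlinarith [sq_nonneg (k - 1/3 + γ/20)]
  have hkr : k ≤ 1/3 + γ/20 := by nlinarith [sq_nonneg (k - 1/3 - γ/20)]
  set A : ℝ := (t * (1 - 0*(1-x))^3 + (1-t)*((1-1/2)*x + 0*(1/2)*x)^3)
      - (t * (1 - k*(1-x))^3 + (1-t)*((1-1/2)*x + k*(1/2)*x)^3) with hA
  set B : ℝ := (t * (1 - 0*(1-x))^3 + (1-t)*((1-1/2)*x + 0*(1/2)*x)^3)
      - (t * (1 - 1*(1-x))^3 + (1-t)*((1-1/2)*x + 1*(1/2)*x)^3) with hB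
  have hA' : A = t*(1 - (1 - k*(1-x))^3) + (1-t)*((x/2)^3 - (x*(1+k)/2)^3) := by
    rw [hA]; ring
  have hB' : B = t*(1-x^3) + (1-t)*((x/2)^3 - x^3) := by rw [hB]; ring
  clear_value A B
  clear hA hB
  have hA_upper : A ≤ t * (19/27 + 3*(γ/20)) := by
    rw [hA']
    exact stmt17_Aub t x k (γ/20) ht0.le (by linarith) hx0 (by linarith) hk0 hk1 hkr
      (by positivity)
  have hA_low : 0 ≤ A := by
    rw [hA']
    exact stmt17_Alb t x k ht1 (by linarith) hx0 hxs (by linarith) hk1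
  have hB_low : t*(1-4*x^2) ≤ B := by
    rw [hB']
    exact stmt17_Blb t x ht1 (by linarith) hx0 (by linarith)
  have hscal : m * (19/27+3*(γ/20)) < 1-4*x^2 := by
    have hmv : m = 27*(1-γ)/19 := by linarith
    rw [hmv]
    nlinarith [sq_nonneg γ, mul_pos hγ0 hγ0]
  have hfin : m * (t*(19/27+3*(γ/20))) < t*(1-4*x^2) := by
    have h := mul_lt_mul_of_pos_left hscal ht0
    nlinarith [h]
  have hchain : c * A ≤ m * A := mul_le_mul_of_nonneg_right hcm hA_low
  have hchain2 : m * A ≤ m * (t*(19/27+3*(γ/20))) :=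
    mul_le_mul_of_nonneg_left hA_upper (by linarith)
  linarith

lemma stmt17_key (x k : ℝ) (hx : 0 < x) (hx1 : x ≤ 1/2) (hk0 : 0 ≤ k) (hk1 : k ≤ 1)
    (hf : (1/3 : ℝ) * ((1 - (1/3)*(1-x))^2 - ((1-1/2)*x + (1/3)*(1/2)*x)^2)
        ≤ k * ((1 - k*(1-x))^2 - ((1-1/2)*x + k*(1/2)*x)^2)) :
    (k - 1/3)^2 ≤ 18 * x := by
  nlinarith [sq_nonneg (k - 1/3), sq_nonneg x, mul_nonneg hk0 hx.le, sq_nonneg (k*x),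
    mul_nonneg (mul_nonneg hk0 hk0) hx.le, sq_nonneg (k-1),
    mul_nonneg (mul_nonneg hx.le hx.le) hx.le]


/-- Tightness of the `27/19` bound for quadratic prices: for every `c < 27/19`
there are `x, ε ∈ (0,1)` such that, in the step-demand quadratic model with
`ψ(k) = t₁·N₁(k)³ + (1−t₁)·N₂(k)³` and `Z(k) = t₁·k·(1−x)·(N₁(k)² − N₂(k)²)`,
the (unique) maximizer `k*` of `Z` on `[0,1]` satisfies
`ψ(0) − ψ(1) > c·(ψ(0) − ψ(k*))`. -/
theorem stmt17 (c : ℝ) (hc : c < 27 / 19) :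
    ∃ x ∈ Set.Ioo (0 : ℝ) 1, ∃ ε ∈ Set.Ioo (0 : ℝ) 1,
      let t₁ : ℝ := x * ε / (1 - x * (1 - ε))
      let N₁ : ℝ → ℝ := fun k => 1 - k * (1 - x)
      let N₂ : ℝ → ℝ := fun k => (1 - ε) * x + k * ε * x
      let ψ : ℝ → ℝ := fun k => t₁ * (N₁ k) ^ 3 + (1 - t₁) * (N₂ k) ^ 3
      let Z : ℝ → ℝ := fun k => t₁ * k * (1 - x) * ((N₁ k) ^ 2 - (N₂ k) ^ 2)
      ∀ kstar ∈ Set.Icc (0 : ℝ) 1, (∀ k ∈ Set.Icc (0 : ℝ) 1, Z k ≤ Z kstar) →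
        ψ 0 - ψ 1 > c * (ψ 0 - ψ kstar) := by
  set m : ℝ := max c (1/2) with hm
  have hm2 : m < 27/19 := by apply max_lt hc; norm_num
  have hm1 : (1/2 : ℝ) ≤ m := le_max_right _ _
  have hcm : c ≤ m := le_max_left _ _
  set γ : ℝ := 1 - m * 19 / 27 with hγdef
  have hγ0 : 0 < γ := by simp only [hγdef]; nlinarith
  have hγ1 : γ ≤ 1 := by simp only [hγdef]; nlinarith
  set x : ℝ := γ^2 / 10000 with hxdef
  have hx0 : 0 < x := by positivity
  have hxs : x ≤ 1/10000 := by rw [hxdef]; nlinarith [sq_nonneg γ]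
  refine ⟨x, ⟨hx0, by nlinarith⟩, 1/2, ⟨by norm_num, by norm_num⟩, ?_⟩
  intro t₁ N₁ N₂ ψ Z kstar hks hmax
  obtain ⟨hks0, hks1⟩ := hks
  have hden : (0:ℝ) < 1 - x * (1 - 1/2) := by nlinarith
  have ht1e : t₁ = x * (1/2) / (1 - x * (1 - 1/2)) := rfl
  have ht1l : x/2 ≤ t₁ := by
    rw [ht1e, le_div_iff₀ hden]; nlinarith
  have ht1u : t₁ ≤ x := by
    rw [ht1e, div_le_iff₀ hden]; nlinarith
  have ht1pos : 0 < t₁ * (1 - x) := by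
    apply mul_pos (by linarith) (by nlinarith)
  have hZ := hmax (1/3) ⟨by norm_num, by norm_num⟩
  simp only [Z, N₁, N₂] at hZ
  have hZ' : (t₁*(1-x)) * ((1/3:ℝ) * ((1 - (1/3)*(1-x))^2 - ((1-1/2)*x + (1/3)*(1/2)*x)^2))
      ≤ (t₁*(1-x)) * (kstar * ((1 - kstar*(1-x))^2 - ((1-1/2)*x + kstar*(1/2)*x)^2)) := by
    have e1 : (t₁*(1-x)) * ((1/3:ℝ) * ((1 - (1/3)*(1-x))^2 - ((1-1/2)*x + (1/3)*(1/2)*x)^2))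
        = t₁ * (1/3) * (1 - x) * ((1 - 1/3 * (1 - x)) ^ 2 - ((1 - 1/2) * x + 1/3 * (1/2) * x) ^ 2) := by ring
    have e2 : (t₁*(1-x)) * (kstar * ((1 - kstar*(1-x))^2 - ((1-1/2)*x + kstar*(1/2)*x)^2))
        = t₁ * kstar * (1 - x) * ((1 - kstar * (1 - x)) ^ 2 - ((1 - 1/2) * x + kstar * (1/2) * x) ^ 2) := by ring
    rw [e1, e2]
    convert hZ using 2 <;> norm_num
  have hf := le_of_mul_le_mul_left hZ' ht1pos
  have hsq : (kstar - 1/3)^2 ≤ 18 * x :=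
    stmt17_key x kstar hx0 (by linarith) hks0 hks1 hf
  have hfinal := stmt17_final t₁ x γ m c kstar hm1 hm2 hcm hγdef hxdef ht1l ht1u hks0 hks1 hsq
  simp only [ψ, N₁, N₂]
  linarith [hfinal]
end
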